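/- arXiv:2411.19735 — 5 statements merged into one kernel-verified Lean document; each statement's English description precedes it below -/
import Mathlib

section
/- Let w be a permutation of [n] (or of the positive integers with finite support), and let a < b with w(a) < w(b). Then ℓ(w·t_{ab}) = ℓ(w) + 1 + 2·#{i : a < i < b and w(a) < w(i) < w(b)}, where ℓ denotes the number of inversions. -/
/-- The inversion number of a permutation of `ℕ`. -/
noncomputable def invNum (w : Equiv.Perm ℕ) : ℕ :=
  {p : ℕ × ℕ | p.1 < p.2 ∧ w p.2 < w p.1}.ncard

open Finset

/-- For a finitely supported permutation `w` of the positive integers and `a < b`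
with `w a < w b`, we have
`ℓ(w·t_{ab}) = ℓ(w) + 1 + 2·#{i : a < i < b, w a < w i < w b}`. -/
theorem stmt_1 (w : Equiv.Perm ℕ) (hw0 : w 0 = 0) (hfin : {i : ℕ | w i ≠ i}.Finite)
    (a b : ℕ) (ha : 1 ≤ a) (hab : a < b) (hwab : w a < w b) :
    invNum (w * Equiv.swap a b) =
      invNum w + 1 + 2 * {i : ℕ | a < i ∧ i < b ∧ w a < w i ∧ w i < w b}.ncard := by
  classical
  -- choose a bound N beyond which everything is fixed
  obtain ⟨N, hbN, hNfix⟩ : ∃ N, b < N ∧ ∀ i, N ≤ i → w i = i := by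
    refine ⟨max (b + 1) (hfin.toFinset.sup id + 1), by omega, fun i hi => ?_⟩
    by_contra h
    have h1 : i ∈ hfin.toFinset := hfin.mem_toFinset.mpr h
    have h2 := Finset.le_sup (f := id) h1
    simp only [id] at h2
    omega
  have haN : a < N := by omega
  set s := Equiv.swap a b with hs
  have hsa : s a = b := Equiv.swap_apply_left a b
  have hsb : s b = a := Equiv.swap_apply_right a b
  have hsi : ∀ i : ℕ, i ≠ a → i ≠ b → s i = i := fun i h1 h2 =>
    Equiv.swap_apply_of_ne_of_ne h1 h2
  have hss : ∀ i : ℕ, s (s i) = i := fun i => Equiv.swap_apply_self a b i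
  have hwN : ∀ i, i < N → w i < N := by
    intro i hi
    by_contra h
    push_neg at h
    have h2 : w (w i) = w i := hNfix (w i) h
    have h3 : w i = i := w.injective h2
    omega
  have hNfix' : ∀ i, N ≤ i → (w * s) i = i := by
    intro i hi
    rw [Equiv.Perm.mul_apply, hsi i (by omega) (by omega)]
    exact hNfix i hi
  have hsN : ∀ i, i < N → s i < N := by
    intro i hi
    by_cases h1 : i = a
    · rw [h1, hsa]; omega
    · by_cases h2 : i = b
      · rw [h2, hsb]; omega
      · rw [hsi i h1 h2]; exact hi
  -- the finsets of inversions
  have hinv : ∀ u : Equiv.Perm ℕ, (∀ i, N ≤ i → u i = i) →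
      invNum u = ((range N ×ˢ range N).filter
        (fun p : ℕ × ℕ => p.1 < p.2 ∧ u p.2 < u p.1)).card := by
    intro u hu
    have hlt : ∀ i, i < N → u i < N := by
      intro i hi
      by_contra h
      push_neg at h
      have h2 : u (u i) = u i := hu (u i) h
      have h3 : u i = i := u.injective h2
      omega
    have hset : {p : ℕ × ℕ | p.1 < p.2 ∧ u p.2 < u p.1} =
        ↑((range N ×ˢ range N).filter
          (fun p : ℕ × ℕ => p.1 < p.2 ∧ u p.2 < u p.1)) := by
      ext p
      simp only [Set.mem_setOf_eq, coe_filter, mem_product, mem_range, Set.mem_setOf_eq]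
      constructor
      · rintro ⟨h1, h2⟩
        have hp2 : p.2 < N := by
          by_contra hc
          push_neg at hc
          have e2 := hu p.2 hc
          rcases lt_or_ge p.1 N with h1' | h1'
          · have := hlt p.1 h1'; omega
          · have := hu p.1 h1'; omega
        exact ⟨⟨lt_trans h1 hp2, hp2⟩, h1, h2⟩
      · tauto
    rw [invNum, hset, Set.ncard_coe_finset]
  -- abbreviations
  set Fw := (range N ×ˢ range N).filter
    (fun p : ℕ × ℕ => p.1 < p.2 ∧ w p.2 < w p.1) with hFw
  set Fw' := (range N ×ˢ range N).filter
    (fun p : ℕ × ℕ => p.1 < p.2 ∧ (w * s) p.2 < (w * s) p.1) with hFw'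
  set M := (Ioo a b).filter (fun i => w a < w i ∧ w i < w b) with hM
  set Xb := (Ioo a b).filter (fun i => w i < w b) with hXb
  set Xa := (Ioo a b).filter (fun i => w i < w a) with hXa
  set Ya := (Ioo a b).filter (fun i => w a < w i) with hYa
  set Yb := (Ioo a b).filter (fun i => w b < w i) with hYb
  -- classification of order-reversing pairs
  have hclass : ∀ i j : ℕ, i < j → s j < s i →
      (i = a ∧ j = b) ∨ (i = a ∧ a < j ∧ j < b) ∨ (j = b ∧ a < i ∧ i < b) := by
    intro i j hij hrev
    by_cases hia : i = a
    · by_cases hjb : j = b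
      · exact Or.inl ⟨hia, hjb⟩
      · have hja : j ≠ a := by omega
        rw [hia, hsa, hsi j hja hjb] at hrev
        exact Or.inr (Or.inl ⟨hia, by omega, hrev⟩)
    · by_cases hjb : j = b
      · have hib : i ≠ b := by omega
        rw [hjb, hsb, hsi i hia hib] at hrev
        exact Or.inr (Or.inr ⟨hjb, hrev, by omega⟩)
      · by_cases hib : i = b
        · have hja : j ≠ a := by omega
          rw [hib, hsb, hsi j hja hjb] at hrev
          omega
        · by_cases hja : j = a
          · rw [hja, hsa, hsi i hia hib] at hrev
            omega
          · rw [hsi i hia hib, hsi j hja hjb] at hrev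
            omega
  -- reversed inversions of w * s
  have E1 : Fw'.filter (fun p => s p.2 < s p.1) =
      insert ((a : ℕ), b) ((Xb.image fun i => ((a : ℕ), i)) ∪ (Ya.image fun i => (i, b))) := by
    ext ⟨i, j⟩
    simp only [hFw', mem_filter, mem_product, mem_range, mem_insert, mem_union, mem_image,
      hXb, hYa, mem_Ioo, Prod.mk.injEq]
    simp only [Equiv.Perm.mul_apply]
    constructor
    · rintro ⟨⟨⟨hiN, hjN⟩, hij, hwlt⟩, hrev⟩
      rcases hclass i j hij hrev with ⟨h1, h2⟩ | ⟨h1, h2, h3⟩ | ⟨h1, h2, h3⟩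
      · exact Or.inl ⟨h1, h2⟩
      · refine Or.inr (Or.inl ⟨j, ⟨⟨h2, h3⟩, ?_⟩, h1.symm, rfl⟩)
        rw [h1, hsa, hsi j (by omega) (by omega)] at hwlt
        exact hwlt
      · refine Or.inr (Or.inr ⟨i, ⟨⟨h2, h3⟩, ?_⟩, rfl, h1.symm⟩)
        rw [h1, hsb, hsi i (by omega) (by omega)] at hwlt
        exact hwlt
    · rintro (⟨h1, h2⟩ | ⟨k, ⟨⟨hk1, hk2⟩, hk3⟩, hk4, hk5⟩ | ⟨k, ⟨⟨hk1, hk2⟩, hk3⟩, hk4, hk5⟩)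
      · subst h1; subst h2
        refine ⟨⟨⟨haN, hbN⟩, hab, ?_⟩, ?_⟩
        · rw [hsa, hsb]; exact hwab
        · rw [hsa, hsb]; exact hab
      · subst hk4; subst hk5
        have hka : k ≠ a := by omega
        have hkb : k ≠ b := by omega
        refine ⟨⟨⟨haN, by omega⟩, by omega, ?_⟩, ?_⟩
        · rw [hsa, hsi k hka hkb]; exact hk3
        · rw [hsa, hsi k hka hkb]; omega
      · subst hk4; subst hk5
        have hka : k ≠ a := by omega
        have hkb : k ≠ b := by omega
        refine ⟨⟨⟨by omega, hbN⟩, by omega, ?_⟩, ?_⟩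
        · rw [hsb, hsi k hka hkb]; exact hk3
        · rw [hsb, hsi k hka hkb]; omega
  -- reversed inversions of w
  have E2 : Fw.filter (fun p => s p.2 < s p.1) =
      (Xa.image fun i => ((a : ℕ), i)) ∪ (Yb.image fun i => (i, b)) := by
    ext ⟨i, j⟩
    simp only [hFw, mem_filter, mem_product, mem_range, mem_union, mem_image,
      hXa, hYb, mem_Ioo, Prod.mk.injEq]
    constructor
    · rintro ⟨⟨⟨hiN, hjN⟩, hij, hwlt⟩, hrev⟩
      rcases hclass i j hij hrev with ⟨h1, h2⟩ | ⟨h1, h2, h3⟩ | ⟨h1, h2, h3⟩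
      · subst h1; subst h2; omega
      · exact Or.inl ⟨j, ⟨⟨h2, h3⟩, by rw [h1] at hwlt; exact hwlt⟩, h1.symm, rfl⟩
      · exact Or.inr ⟨i, ⟨⟨h2, h3⟩, by rw [h1] at hwlt; exact hwlt⟩, rfl, h1.symm⟩
    · rintro (⟨k, ⟨⟨hk1, hk2⟩, hk3⟩, hk4, hk5⟩ | ⟨k, ⟨⟨hk1, hk2⟩, hk3⟩, hk4, hk5⟩)
      · subst hk4; subst hk5
        have hka : k ≠ a := by omega
        have hkb : k ≠ b := by omega
        refine ⟨⟨⟨haN, by omega⟩, by omega, hk3⟩, ?_⟩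
        rw [hsa, hsi k hka hkb]; omega
      · subst hk4; subst hk5
        have hka : k ≠ a := by omega
        have hkb : k ≠ b := by omega
        refine ⟨⟨⟨by omega, hbN⟩, by omega, hk3⟩, ?_⟩
        rw [hsb, hsi k hka hkb]; omega
  -- bijection for non-reversed pairs
  have hmaps : ∀ (u : Equiv.Perm ℕ) (p : ℕ × ℕ),
      p ∈ ((range N ×ˢ range N).filter
        (fun p : ℕ × ℕ => p.1 < p.2 ∧ u p.2 < u p.1)).filter (fun p => ¬ s p.2 < s p.1) →
      (s p.1, s p.2) ∈ ((range N ×ˢ range N).filter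
        (fun p : ℕ × ℕ => p.1 < p.2 ∧ (u * s) p.2 < (u * s) p.1)).filter
        (fun p => ¬ s p.2 < s p.1) := by
    intro u p hp
    simp only [mem_filter, mem_product, mem_range] at hp ⊢
    simp only [Equiv.Perm.mul_apply] at hp ⊢
    obtain ⟨⟨⟨h1, h2⟩, h3, h4⟩, h5⟩ := hp
    have hne : s p.1 ≠ s p.2 := fun h => absurd (s.injective h) (by omega)
    refine ⟨⟨⟨hsN _ h1, hsN _ h2⟩, by omega, ?_⟩, ?_⟩
    · rw [hss, hss]; exact h4
    · rw [hss, hss]; omega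
  have hws : w * s * s = w := by
    rw [mul_assoc, hs, Equiv.swap_mul_self, mul_one]
  have E3 : (Fw.filter (fun p => ¬ s p.2 < s p.1)).card =
      (Fw'.filter (fun p => ¬ s p.2 < s p.1)).card := by
    rw [hFw, hFw']
    refine Finset.card_bij' (fun p _ => (s p.1, s p.2)) (fun p _ => (s p.1, s p.2))
      (fun p hp => hmaps w p hp) (fun p hp => ?_) (fun p hp => by simp [hss]) (fun p hp => by simp [hss])
    have := hmaps (w * s) p hp
    rwa [hws] at this
  -- splitting the middle counts
  have hne_wa : ∀ i ∈ Ioo a b, w i ≠ w a := by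
    intro i hi h
    have := w.injective h
    simp only [mem_Ioo] at hi
    omega
  have hne_wb : ∀ i ∈ Ioo a b, w i ≠ w b := by
    intro i hi h
    have := w.injective h
    simp only [mem_Ioo] at hi
    omega
  have hXsplit : Xb.card = Xa.card + M.card := by
    have h1 : Xb = Xa ∪ M := by
      rw [hXb, hXa, hM, ← filter_or]
      refine filter_congr fun i hi => ?_
      have := hne_wa i hi
      constructor
      · intro h; omega
      · intro h; omega
    have h2 : Disjoint Xa M := by
      rw [Finset.disjoint_left]
      intro i h1 h2
      simp only [hXa, hM, mem_filter] at h1 h2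
      omega
    rw [h1, card_union_of_disjoint h2]
  have hYsplit : Ya.card = Yb.card + M.card := by
    have h1 : Ya = Yb ∪ M := by
      rw [hYa, hYb, hM, ← filter_or]
      refine filter_congr fun i hi => ?_
      have := hne_wb i hi
      constructor
      · intro h; omega
      · intro h; omega
    have h2 : Disjoint Yb M := by
      rw [Finset.disjoint_left]
      intro i h1 h2
      simp only [hYb, hM, mem_filter] at h1 h2
      omega
    rw [h1, card_union_of_disjoint h2]
  -- cardinalities of the reversed parts
  have hinj1 : Function.Injective (fun i : ℕ => ((a : ℕ), i)) := by
    intro i j h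
    simpa using h
  have hinj2 : Function.Injective (fun i : ℕ => (i, (b : ℕ))) := by
    intro i j h
    simpa using h
  have C1 : (Fw'.filter (fun p => s p.2 < s p.1)).card = 1 + (Xb.card + Ya.card) := by
    rw [E1]
    have hnotmem : ((a : ℕ), b) ∉ (Xb.image fun i => ((a : ℕ), i)) ∪ (Ya.image fun i => (i, b)) := by
      simp only [mem_union, mem_image, hXb, hYa, mem_filter, mem_Ioo, Prod.mk.injEq]
      rintro (⟨k, ⟨⟨hk1, hk2⟩, _⟩, _, hk4⟩ | ⟨k, ⟨⟨hk1, hk2⟩, _⟩, hk4, _⟩) <;> omega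
    have hdisj : Disjoint (Xb.image fun i => ((a : ℕ), i)) (Ya.image fun i => (i, b)) := by
      rw [Finset.disjoint_left]
      intro p hp1 hp2
      simp only [mem_image, hXb, hYa, mem_filter, mem_Ioo, Prod.mk.injEq] at hp1 hp2
      obtain ⟨k, ⟨⟨hk1, hk2⟩, _⟩, hk3, hk4⟩ := hp1
      obtain ⟨l, ⟨⟨hl1, hl2⟩, _⟩, hl3, hl4⟩ := hp2
      omega
    rw [card_insert_of_notMem hnotmem, card_union_of_disjoint hdisj,
      card_image_of_injective _ hinj1, card_image_of_injective _ hinj2]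
    omega
  have C2 : (Fw.filter (fun p => s p.2 < s p.1)).card = Xa.card + Yb.card := by
    rw [E2]
    have hdisj : Disjoint (Xa.image fun i => ((a : ℕ), i)) (Yb.image fun i => (i, b)) := by
      rw [Finset.disjoint_left]
      intro p hp1 hp2
      simp only [mem_image, hXa, hYb, mem_filter, mem_Ioo, Prod.mk.injEq] at hp1 hp2
      obtain ⟨k, ⟨⟨hk1, hk2⟩, _⟩, hk3, hk4⟩ := hp1
      obtain ⟨l, ⟨⟨hl1, hl2⟩, _⟩, hl3, hl4⟩ := hp2
      omega
    rw [card_union_of_disjoint hdisj,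
      card_image_of_injective _ hinj1, card_image_of_injective _ hinj2]
  -- assembling
  have hT1 : Fw'.card = (Fw'.filter (fun p => s p.2 < s p.1)).card +
      (Fw'.filter (fun p => ¬ s p.2 < s p.1)).card :=
    (Finset.card_filter_add_card_filter_not _).symm
  have hT2 : Fw.card = (Fw.filter (fun p => s p.2 < s p.1)).card +
      (Fw.filter (fun p => ¬ s p.2 < s p.1)).card :=
    (Finset.card_filter_add_card_filter_not _).symm
  have hmid : {i : ℕ | a < i ∧ i < b ∧ w a < w i ∧ w i < w b}.ncard = M.card := by
    have : {i : ℕ | a < i ∧ i < b ∧ w a < w i ∧ w i < w b} = ↑M := by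
      ext i
      simp [hM, mem_Ioo, and_assoc]
    rw [this, Set.ncard_coe_finset]
  rw [hinv (w * s) hNfix', hinv w hNfix, hmid]
  rw [← hFw', ← hFw]
  omega
end

section
/- Let w be a permutation of the positive integers fixing every j > n, let 1 ≤ a ≤ n and b > n. If ℓ(w·t_{ab}) = ℓ(w) + 1, then b = n + 1. -/
lemma aux_le (v : Equiv.Perm ℕ) (m : ℕ) (hv : ∀ j, m < j → v j = j) :
    ∀ i, i ≤ m → v i ≤ m := by
  intro i hi
  by_contra hlt
  have h1 : v (v i) = v i := hv _ (lt_of_not_ge hlt)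
  have h2 := v.injective h1
  omega

lemma aux_mem (v : Equiv.Perm ℕ) (m : ℕ) (hv : ∀ j, m < j → v j = j) :
    ∀ p : ℕ × ℕ, p ∈ {p : ℕ × ℕ | p.1 < p.2 ∧ v p.2 < v p.1} → p.1 < p.2 ∧ p.2 ≤ m := by
  intro p hp
  obtain ⟨h1, h2⟩ := hp
  refine ⟨h1, ?_⟩
  by_contra hgt
  push_neg at hgt
  have hv2 : v p.2 = p.2 := hv _ hgt
  have : v p.1 < p.2 := by
    rcases le_or_gt p.1 m with hc | hc
    · exact lt_of_le_of_lt (aux_le v m hv _ hc) hgt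
    · rw [hv _ hc]; exact h1
  omega

lemma aux_fin (v : Equiv.Perm ℕ) (m : ℕ) (hv : ∀ j, m < j → v j = j) :
    {p : ℕ × ℕ | p.1 < p.2 ∧ v p.2 < v p.1}.Finite := by
  apply Set.Finite.subset ((Set.finite_Iic m).prod (Set.finite_Iic m))
  intro p hp
  obtain ⟨h1, h2⟩ := aux_mem v m hv p hp
  exact ⟨le_of_lt (lt_of_lt_of_le h1 h2), h2⟩

/-- If `w` fixes every `j > n`, `1 ≤ a ≤ n < b` and `ℓ(w·t_{ab}) = ℓ(w) + 1`,
then `b = n + 1`. -/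
theorem stmt_5 (n : ℕ) (w : Equiv.Perm ℕ) (hw0 : w 0 = 0)
    (hfix : ∀ j, n < j → w j = j)
    (a b : ℕ) (ha1 : 1 ≤ a) (han : a ≤ n) (hb : n < b)
    (h : invNum (w * Equiv.swap a b) = invNum w + 1) : b = n + 1 := by
  by_contra hbne
  have hb2 : n + 1 < b := by omega
  set w' : Equiv.Perm ℕ := w * Equiv.swap a b with hw'def
  set S1 : Set (ℕ × ℕ) := {p : ℕ × ℕ | p.1 < p.2 ∧ w p.2 < w p.1} with hS1def
  set S2 : Set (ℕ × ℕ) := {p : ℕ × ℕ | p.1 < p.2 ∧ w' p.2 < w' p.1} with hS2def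
  have hab : a ≠ b := by omega
  have hwb : w b = b := hfix b hb
  have hw'a : w' a = b := by
    rw [hw'def, Equiv.Perm.mul_apply, Equiv.swap_apply_left, hwb]
  have hw'b : w' b = w a := by
    rw [hw'def, Equiv.Perm.mul_apply, Equiv.swap_apply_right]
  have hw'c : ∀ c, c ≠ a → c ≠ b → w' c = w c := by
    intro c h1 h2
    rw [hw'def, Equiv.Perm.mul_apply, Equiv.swap_apply_of_ne_of_ne h1 h2]
  have hwle : ∀ i, i ≤ n → w i ≤ n := aux_le w n hfix
  have hmem : ∀ p : ℕ × ℕ, p ∈ S1 → p.1 < p.2 ∧ p.2 ≤ n := aux_mem w n hfix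
  have hfin1 : S1.Finite := aux_fin w n hfix
  have hfix' : ∀ j, b < j → w' j = j := by
    intro j hj
    rw [hw'c j (by omega) (by omega)]
    exact hfix j (by omega)
  have hfin2 : S2.Finite := aux_fin w' b hfix'
  set f : ℕ × ℕ → ℕ × ℕ := fun p => if p.2 = a then (p.1, b) else p with hfdef
  have hfa : ∀ p : ℕ × ℕ, p.2 = a → f p = (p.1, b) := by
    intro p hp; simp [hfdef, hp]
  have hfna : ∀ p : ℕ × ℕ, p.2 ≠ a → f p = p := by
    intro p hp; simp [hfdef, hp]
  -- image of f on S1 lands in S2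
  have himg : f '' S1 ⊆ S2 := by
    rintro q ⟨p, hp, rfl⟩
    obtain ⟨hlt, hle⟩ := hmem p hp
    obtain ⟨_, hinv⟩ := hp
    by_cases hpa : p.2 = a
    · rw [hfa p hpa]
      refine ⟨by omega, ?_⟩
      rw [hw'b, hw'c p.1 (by omega) (by omega)]
      rw [hpa] at hinv; exact hinv
    · rw [hfna p hpa]
      have hpb : p.2 ≠ b := by omega
      have h2 : w' p.2 = w p.2 := hw'c p.2 hpa hpb
      refine ⟨hlt, ?_⟩
      by_cases hp1 : p.1 = a
      · rw [h2, hp1, hw'a]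
        exact lt_of_le_of_lt (hwle p.2 hle) hb
      · rw [h2, hw'c p.1 hp1 (by omega)]
        exact hinv
  have hinj : Set.InjOn f S1 := by
    intro p hp q hq hfeq
    obtain ⟨hlt1, hle1⟩ := hmem p hp
    obtain ⟨hlt2, hle2⟩ := hmem q hq
    by_cases hpa : p.2 = a <;> by_cases hqa : q.2 = a
    · rw [hfa p hpa, hfa q hqa] at hfeq
      have : p.1 = q.1 := (Prod.ext_iff.mp hfeq).1
      exact Prod.ext this (by rw [hpa, hqa])
    · rw [hfa p hpa, hfna q hqa] at hfeq
      have : b = q.2 := (Prod.ext_iff.mp hfeq).2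
      omega
    · rw [hfna p hpa, hfa q hqa] at hfeq
      have : p.2 = b := (Prod.ext_iff.mp hfeq).2
      omega
    · rw [hfna p hpa, hfna q hqa] at hfeq; exact hfeq
  -- the three new inversions
  have hwa : w a ≤ n := hwle a han
  have hone : (a, b) ∈ S2 := ⟨by omega, by rw [hw'a, hw'b]; omega⟩
  have hw'n1 : w' (n+1) = n + 1 := by
    rw [hw'c (n+1) (by omega) (by omega)]; exact hfix (n+1) (by omega)
  have htwo : (a, n+1) ∈ S2 := ⟨by omega, by rw [hw'a, hw'n1]; omega⟩
  have hthree : (n+1, b) ∈ S2 := ⟨by omega, by rw [hw'b, hw'n1]; omega⟩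
  -- they are not in the image
  have hnotmem : ∀ q : ℕ × ℕ, q ∈ f '' S1 → q.2 ≤ n ∨ (q.2 = b ∧ q.1 < a) := by
    rintro q ⟨p, hp, rfl⟩
    obtain ⟨hlt, hle⟩ := hmem p hp
    by_cases hpa : p.2 = a
    · rw [hfa p hpa]; right; exact ⟨rfl, by omega⟩
    · rw [hfna p hpa]; left; exact hle
  have n1 : (a, b) ∉ f '' S1 := by
    intro hq; rcases hnotmem _ hq with h' | ⟨h1, h2⟩ <;> simp_all <;> omega
  have n2 : (a, n+1) ∉ f '' S1 := by
    intro hq; rcases hnotmem _ hq with h' | ⟨h1, h2⟩ <;> simp_all <;> omega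
  have n3 : (n+1, b) ∉ f '' S1 := by
    intro hq; rcases hnotmem _ hq with h' | ⟨h1, h2⟩ <;> dsimp only at * <;> omega
  -- counting
  have fin_img : (f '' S1).Finite := hfin1.image f
  have c0 : (f '' S1).ncard = S1.ncard := Set.ncard_image_of_injOn hinj
  have c1 : (insert (n+1, b) (f '' S1)).ncard = (f '' S1).ncard + 1 :=
    Set.ncard_insert_of_notMem n3 fin_img
  have n2' : (a, n+1) ∉ insert (n+1, b) (f '' S1) := by
    simp only [Set.mem_insert_iff]
    push_neg
    exact ⟨by simp; omega, n2⟩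
  have c2 : (insert (a, n+1) (insert (n+1, b) (f '' S1))).ncard
      = (insert (n+1, b) (f '' S1)).ncard + 1 :=
    Set.ncard_insert_of_notMem n2' (fin_img.insert _)
  have n1' : (a, b) ∉ insert (a, n+1) (insert (n+1, b) (f '' S1)) := by
    simp only [Set.mem_insert_iff]
    push_neg
    exact ⟨by simp; omega, by simp; omega, n1⟩
  have c3 : (insert (a, b) (insert (a, n+1) (insert (n+1, b) (f '' S1)))).ncard
      = (insert (a, n+1) (insert (n+1, b) (f '' S1))).ncard + 1 :=
    Set.ncard_insert_of_notMem n1' ((fin_img.insert _).insert _)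
  have hsub : insert (a, b) (insert (a, n+1) (insert (n+1, b) (f '' S1))) ⊆ S2 := by
    intro q hq
    rcases hq with rfl | rfl | rfl | hq
    · exact hone
    · exact htwo
    · exact hthree
    · exact himg hq
  have hle' := Set.ncard_le_ncard hsub hfin2
  have hfinal : invNum w' = S2.ncard := rfl
  have hfinal1 : invNum w = S1.ncard := rfl
  rw [hfinal, hfinal1] at h
  omega
end

section
/- Let w be a permutation of the positive integers fixing every j > n, and let 1 ≤ a ≤ n. Then ℓ(w·t_{a,n+1}) = ℓ(w) + 1 if and only if w(a) = max{ w(i) : a ≤ i ≤ n }, i.e. a is a position of a right-to-left maximum of (w(1),…,w(n)). -/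
/-
Count the inversions of a permutation fixing everything beyond `n + 1` by their first position.
Right multiplication by `t = t_{a,n+1}` permutes the positions after any `i < a`, so only the
counts at positions `i ≥ a` change: position `a` now holds the maximal value `n + 1` and gains the
`m + 1` later positions whose values exceed `w a`, where `m = #{j ∈ (a, n] | w a < w j}`, and each
such `j` gains an inversion with position `n + 1`, which now holds `w a`. Hence
`ℓ(w t) = ℓ(w) + 2m + 1`.
-/

open Finset Equiv

def invNumAt (u : Perm ℕ) (N i : ℕ) : ℕ := #{j ∈ Ioc i N | u j < u i}

lemma apply_lt_succ_of_forall_lt_apply_eq {u : Perm ℕ} {N i : ℕ} (h : ∀ j, N < j → u j = j)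
    (hi : i ≤ N) : u i < N + 1 := by
  by_contra! hlt
  have := u.injective (h (u i) hlt)
  omega

lemma invNum_eq_sum_invNumAt {u : Perm ℕ} {N : ℕ} (h : ∀ j, N < j → u j = j) :
    invNum u = ∑ i ∈ range (N + 1), invNumAt u N i := by
  have hfin : {p : ℕ × ℕ | p.1 < p.2 ∧ u p.2 < u p.1} =
      ↑{p ∈ range (N + 1) ×ˢ range (N + 1) | p.1 < p.2 ∧ u p.2 < u p.1} := by
    ext ⟨i, j⟩
    simp only [Set.mem_ofPred_eq, coe_filter, mem_product, mem_range]
    refine ⟨fun hij => ⟨?_, hij⟩, And.right⟩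
    suffices j ≤ N by omega
    by_contra! hj
    have hui : u i < N + 1 ∨ u i = i := by
      by_cases hi : i ≤ N
      · exact .inl (apply_lt_succ_of_forall_lt_apply_eq h hi)
      · exact .inr (h i (by omega))
    have := h j hj
    omega
  rw [invNum, hfin, Set.ncard_coe_finset, card_filter, sum_product]
  refine sum_congr rfl fun i _ => ?_
  rw [← card_filter, invNumAt]
  congr 1
  ext j
  simp only [mem_filter, mem_range, mem_Ioc]
  omega

lemma invNumAt_mul_swap_of_lt {u : Perm ℕ} {N a b i : ℕ} (hia : i < a) (hib : i < b)
    (ha : a ≤ N) (hb : b ≤ N) : invNumAt (u * swap a b) N i = invNumAt u N i := by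
  have hi : (u * swap a b) i = u i := by
    rw [Perm.mul_apply, swap_apply_of_ne_of_ne hia.ne hib.ne]
  rw [invNumAt, invNumAt, card_filter, card_filter, hi]
  refine (swap a b).sum_comp _ (fun j => if u j < u i then 1 else 0) fun j hj => ?_
  rw [Set.mem_ofPred_eq, swap_apply_ne_self_iff] at hj
  rw [mem_coe, mem_Ioc]
  omega

section MulSwap

variable {n a : ℕ} {w : Perm ℕ}

lemma mul_swap_apply_eq_self (hfix : ∀ j, n < j → w j = j) (ha : a ≤ n) :
    ∀ j, n + 1 < j → (w * swap a (n + 1)) j = j := fun j hj => by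
  rw [Perm.mul_apply, swap_apply_of_ne_of_ne (by omega) (by omega), hfix j (by omega)]

lemma invNumAt_mul_swap_self (hfix : ∀ j, n < j → w j = j) (ha : a ≤ n) :
    invNumAt (w * swap a (n + 1)) (n + 1) a = n + 1 - a := by
  have hwa : (w * swap a (n + 1)) a = n + 1 := by
    rw [Perm.mul_apply, swap_apply_left, hfix _ n.lt_add_one]
  rw [invNumAt, hwa, filter_true_of_mem, Nat.card_Ioc]
  intro j hj
  rw [mem_Ioc] at hj
  rcases eq_or_ne j (n + 1) with rfl | hjn
  · rw [Perm.mul_apply, swap_apply_right]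
    exact apply_lt_succ_of_forall_lt_apply_eq hfix ha
  · rw [Perm.mul_apply, swap_apply_of_ne_of_ne (by omega) hjn]
    exact apply_lt_succ_of_forall_lt_apply_eq hfix (by omega)

lemma invNumAt_add_card_filter_lt (hfix : ∀ j, n < j → w j = j) (ha : a ≤ n) :
    invNumAt w (n + 1) a + #{j ∈ Ioc a n | w a < w j} = n - a := by
  have hlast : invNumAt w (n + 1) a = #{j ∈ Ioc a n | w j < w a} := by
    rw [invNumAt, ← insert_Ioc_right_eq_Ioc_add_one (by omega), filter_insert,
      hfix _ n.lt_add_one, if_neg (apply_lt_succ_of_forall_lt_apply_eq hfix ha).asymm]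
  have hcompl : {j ∈ Ioc a n | w a < w j} = {j ∈ Ioc a n | ¬ w j < w a} := by
    refine filter_congr fun j hj => ?_
    have : w j ≠ w a := fun h => by
      have := w.injective h
      rw [mem_Ioc] at hj
      omega
    omega
  rw [hlast, hcompl, card_filter_add_card_filter_not, Nat.card_Ioc]

lemma invNumAt_mul_swap_of_gt (hfix : ∀ j, n < j → w j = j) {i : ℕ} (hai : a < i)
    (hin : i ≤ n) :
    invNumAt (w * swap a (n + 1)) (n + 1) i
      = invNumAt w (n + 1) i + if w a < w i then 1 else 0 := by
  have hwi : (w * swap a (n + 1)) i = w i := by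
    rw [Perm.mul_apply, swap_apply_of_ne_of_ne (by omega) (by omega)]
  have hrest : {j ∈ Ioc i n | (w * swap a (n + 1)) j < w i} = {j ∈ Ioc i n | w j < w i} := by
    refine filter_congr fun j hj => ?_
    rw [mem_Ioc] at hj
    rw [Perm.mul_apply, swap_apply_of_ne_of_ne (by omega) (by omega)]
  rw [invNumAt, invNumAt, hwi, ← insert_Ioc_right_eq_Ioc_add_one hin, filter_insert,
    filter_insert, hrest, Perm.mul_apply, swap_apply_right, hfix _ n.lt_add_one,
    if_neg (apply_lt_succ_of_forall_lt_apply_eq hfix hin).asymm]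
  split_ifs
  · rw [card_insert_of_notMem (by simp)]
  · rfl

lemma invNumAt_mul_swap (hfix : ∀ j, n < j → w j = j) (ha : a ≤ n) {i : ℕ}
    (hi : i ≤ n + 1) :
    invNumAt (w * swap a (n + 1)) (n + 1) i = invNumAt w (n + 1) i
      + (if i = a then #{j ∈ Ioc a n | w a < w j} + 1 else 0)
      + (if i ∈ {j ∈ Ioc a n | w a < w j} then 1 else 0) := by
  rcases lt_trichotomy i a with hia | rfl | hai
  · rw [invNumAt_mul_swap_of_lt hia (by omega) (by omega) le_rfl, if_neg hia.ne,
      if_neg (by simp only [mem_filter, mem_Ioc]; omega), add_zero, add_zero]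
  · have := invNumAt_add_card_filter_lt hfix ha
    rw [invNumAt_mul_swap_self hfix ha, if_pos rfl, if_neg (by simp)]
    omega
  · obtain rfl | hin := eq_or_lt_of_le hi
    · simp [invNumAt, hai.ne']
    · rw [invNumAt_mul_swap_of_gt hfix hai (by omega), if_neg hai.ne', add_zero]
      simp only [mem_filter, mem_Ioc, hai, true_and, Nat.le_of_lt_succ hin]

theorem invNum_mul_swap (hfix : ∀ j, n < j → w j = j) (ha : a ≤ n) :
    invNum (w * swap a (n + 1)) = invNum w + 2 * #{j ∈ Ioc a n | w a < w j} + 1 := by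
  have hS : {j ∈ Ioc a n | w a < w j} ⊆ range (n + 2) := fun j hj => by
    simp only [mem_filter, mem_Ioc] at hj
    simp only [mem_range]
    omega
  rw [invNum_eq_sum_invNumAt (mul_swap_apply_eq_self hfix ha),
    invNum_eq_sum_invNumAt (N := n + 1) fun j hj => hfix j (by omega),
    sum_congr rfl fun i hi => invNumAt_mul_swap hfix ha (Nat.le_of_lt_succ (mem_range.mp hi)),
    sum_add_distrib, sum_add_distrib, sum_ite_eq', if_pos (mem_range.mpr (by omega)),
    sum_ite_mem, inter_eq_right.mpr hS, sum_const, smul_eq_mul, mul_one]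
  ring

end MulSwap

theorem stmt_6_general (n : ℕ) (w : Equiv.Perm ℕ)
    (hfix : ∀ j, n < j → w j = j)
    (a : ℕ) (han : a ≤ n) :
    invNum (w * Equiv.swap a (n + 1)) = invNum w + 1 ↔
      ∀ i, a ≤ i → i ≤ n → w i ≤ w a := by
  rw [invNum_mul_swap hfix han, add_right_comm, add_eq_left, mul_eq_zero, card_eq_zero,
    filter_eq_empty_iff]
  simp only [OfNat.ofNat_ne_zero, false_or, mem_Ioc, not_lt, and_imp]
  refine ⟨fun h i hai hin => ?_, fun h i hai hin => h i hai.le hin⟩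
  obtain rfl | hai := eq_or_lt_of_le hai
  exacts [le_rfl, h hai hin]

/-- If `w` fixes every `j > n` and `1 ≤ a ≤ n`, then `ℓ(w·t_{a,n+1}) = ℓ(w) + 1`
iff `w a = max { w i : a ≤ i ≤ n }`, i.e. `a` is the position of a right-to-left
maximum of `(w 1, …, w n)`. -/
theorem stmt_6 (n : ℕ) (w : Equiv.Perm ℕ) (hw0 : w 0 = 0)
    (hfix : ∀ j, n < j → w j = j)
    (a : ℕ) (ha1 : 1 ≤ a) (han : a ≤ n) :
    invNum (w * Equiv.swap a (n + 1)) = invNum w + 1 ↔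
      ∀ i, a ≤ i → i ≤ n → w i ≤ w a :=
  stmt_6_general n w hfix a han
end

section
/- (Lemma 3.2 of the paper.) Let w be a permutation of the positive integers fixing every j > n, and suppose u = w·t_{a_1 b_1}·t_{a_2 b_2}⋯t_{a_m b_m} where a_1 ≤ a_2 ≤ ⋯ ≤ a_m ≤ n, all b_i > n, the b_i are pairwise distinct, and ℓ(w·t_{a_1 b_1}⋯t_{a_i b_i}) = ℓ(w) + i for every 1 ≤ i ≤ m. Then a_1 = a_2 = ⋯ = a_m and b_i = n + i for every i; that is, u = w·t_{a,n+1}·t_{a,n+2}⋯t_{a,n+m} for some 1 ≤ a ≤ n. -/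
lemma invSet_finite (v : Equiv.Perm ℕ) (N : ℕ) (hv : ∀ j, N < j → v j = j) :
    {p : ℕ × ℕ | p.1 < p.2 ∧ v p.2 < v p.1}.Finite := by
  apply ((Set.finite_Iic N).prod (Set.finite_Iic N)).subset
  rintro ⟨p, q⟩ ⟨h1, h2⟩
  simp only at h1 h2
  simp only [Set.mem_prod, Set.mem_Iic]
  have hq : q ≤ N := by
    by_contra hq
    push_neg at hq
    have hvq : v q = q := hv q hq
    have hvp : N < v p := by omega
    have h3 : v (v p) = v p := hv _ hvp
    have h4 : v p = p := v.injective h3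
    omega
  exact ⟨by omega, hq⟩

set_option maxHeartbeats 1000000 in
lemma key (v : Equiv.Perm ℕ) (N : ℕ) (hv : ∀ j, N < j → v j = j) (x y c : ℕ)
    (hxc : x < c) (hcy : c < y)
    (h1 : v x < v c) (h2 : v c < v y) :
    invNum (v * Equiv.swap x y) ≠ invNum v + 1 := by
  classical
  have hxy : x < y := hxc.trans hcy
  have hvxy : v x < v y := h1.trans h2
  set v' := v * Equiv.swap x y with hv'
  set S := {p : ℕ × ℕ | p.1 < p.2 ∧ v p.2 < v p.1} with hSdef
  set T := {p : ℕ × ℕ | p.1 < p.2 ∧ v' p.2 < v' p.1} with hTdef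
  have hSfin : S.Finite := invSet_finite v N hv
  have happ : ∀ z, v' z = v (Equiv.swap x y z) := fun z => rfl
  set σ := Equiv.swap x y with hσdef
  have hσx : σ x = y := Equiv.swap_apply_left x y
  have hσy : σ y = x := Equiv.swap_apply_right x y
  have hσo : ∀ z, z ≠ x → z ≠ y → σ z = z := fun z => Equiv.swap_apply_of_ne_of_ne
  have hσσ : ∀ z, σ (σ z) = z := fun z => Equiv.swap_apply_self x y z
  have hTfin : T.Finite := by
    apply invSet_finite v' (max N y)
    intro j hj
    rw [happ, hσo j (by omega) (by omega)]
    exact hv j (by omega)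
  set φ : ℕ × ℕ → ℕ × ℕ := fun p =>
    if (x < p.1 ∧ p.1 < y) ∨ (x < p.2 ∧ p.2 < y) then p
    else (min (σ p.1) (σ p.2), max (σ p.1) (σ p.2)) with hφdef
  have hord : ∀ p : ℕ × ℕ, p ∈ S → ¬((x < p.1 ∧ p.1 < y) ∨ (x < p.2 ∧ p.2 < y)) →
      σ p.1 < σ p.2 := by
    rintro ⟨p1, p2⟩ ⟨hlt, hvlt⟩ hcond
    simp only at hlt hvlt hcond ⊢
    rcases eq_or_ne p1 x with rfl | h1x
    · rw [hσx]
      rcases eq_or_ne p2 y with rfl | h2y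
      · omega
      · rw [hσo p2 (by omega) h2y]; omega
    rcases eq_or_ne p1 y with rfl | h1y
    · rw [hσy, hσo p2 (by omega) (by omega)]; omega
    · rw [hσo p1 h1x h1y]
      rcases eq_or_ne p2 x with rfl | h2x
      · rw [hσx]; omega
      rcases eq_or_ne p2 y with rfl | h2y
      · rw [hσy]; omega
      · rw [hσo p2 h2x h2y]; omega
  have hmaps : ∀ p ∈ S, φ p ∈ T := by
    rintro ⟨p1, p2⟩ ⟨hlt, hvlt⟩
    simp only at hlt hvlt
    by_cases hcond : (x < p1 ∧ p1 < y) ∨ (x < p2 ∧ p2 < y)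
    · have hφp : φ (p1, p2) = (p1, p2) := if_pos hcond
      rw [hφp]
      refine ⟨hlt, ?_⟩
      rw [happ, happ]
      rcases eq_or_ne p1 x with rfl | h1x
      · rcases eq_or_ne p2 y with rfl | h2y
        · omega
        · rw [hσx, hσo p2 (by omega) h2y]
          exact hvlt.trans hvxy
      rcases eq_or_ne p1 y with rfl | h1y
      · omega
      rcases eq_or_ne p2 x with rfl | h2x
      · omega
      rcases eq_or_ne p2 y with rfl | h2y
      · rw [hσy, hσo p1 h1x h1y]
        exact hvxy.trans hvlt
      · rw [hσo p1 h1x h1y, hσo p2 h2x h2y]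
        exact hvlt
    · have hφp : φ (p1, p2) = (min (σ p1) (σ p2), max (σ p1) (σ p2)) := if_neg hcond
      have ho := hord (p1, p2) ⟨hlt, hvlt⟩ hcond
      simp only at ho
      rw [hφp, min_eq_left ho.le, max_eq_right ho.le]
      refine ⟨ho, ?_⟩
      rw [happ, happ, hσσ, hσσ]
      exact hvlt
  have hcondφ : ∀ p : ℕ × ℕ,
      ((x < (φ p).1 ∧ (φ p).1 < y) ∨ (x < (φ p).2 ∧ (φ p).2 < y)) ↔
      ((x < p.1 ∧ p.1 < y) ∨ (x < p.2 ∧ p.2 < y)) := by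
    intro p
    have hB : ∀ z : ℕ, (x < σ z ∧ σ z < y) ↔ (x < z ∧ z < y) := by
      intro z
      rcases eq_or_ne z x with rfl | hzx
      · rw [hσx]; omega
      rcases eq_or_ne z y with rfl | hzy
      · rw [hσy]; omega
      · rw [hσo z hzx hzy]
    by_cases hcond : (x < p.1 ∧ p.1 < y) ∨ (x < p.2 ∧ p.2 < y)
    · have : φ p = p := if_pos hcond
      rw [this]
    · have : φ p = (min (σ p.1) (σ p.2), max (σ p.1) (σ p.2)) := if_neg hcond
      rw [this]
      have b1 := hB p.1
      have b2 := hB p.2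
      rcases le_total (σ p.1) (σ p.2) with h | h
      · rw [min_eq_left h, max_eq_right h]; simp only; tauto
      · rw [min_eq_right h, max_eq_left h]; simp only; tauto
  have hinj : Set.InjOn φ S := by
    rintro p hp q hq heq
    have hcc : ((x < p.1 ∧ p.1 < y) ∨ (x < p.2 ∧ p.2 < y)) ↔
        ((x < q.1 ∧ q.1 < y) ∨ (x < q.2 ∧ q.2 < y)) := by
      rw [← hcondφ p, ← hcondφ q, heq]
    by_cases hcp : (x < p.1 ∧ p.1 < y) ∨ (x < p.2 ∧ p.2 < y)
    · have hcq := hcc.mp hcp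
      have e1 : φ p = p := if_pos hcp
      have e2 : φ q = q := if_pos hcq
      rw [e1, e2] at heq
      exact heq
    · have hcq := fun h => hcp (hcc.mpr h)
      have e1 : φ p = (min (σ p.1) (σ p.2), max (σ p.1) (σ p.2)) := if_neg hcp
      have e2 : φ q = (min (σ q.1) (σ q.2), max (σ q.1) (σ q.2)) := if_neg hcq
      have hop := hord p hp hcp
      have hoq := hord q hq hcq
      rw [e1, e2, min_eq_left hop.le, max_eq_right hop.le,
        min_eq_left hoq.le, max_eq_right hoq.le] at heq
      have e3 : σ p.1 = σ q.1 := congrArg Prod.fst heq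
      have e4 : σ p.2 = σ q.2 := congrArg Prod.snd heq
      have f3 : p.1 = q.1 := σ.injective e3
      have f4 : p.2 = q.2 := σ.injective e4
      exact Prod.ext f3 f4
  have hnm : ∀ z : ℕ × ℕ, ((x < z.1 ∧ z.1 < y) ∨ (x < z.2 ∧ z.2 < y)) → z ∉ S →
      z ∉ φ '' S := by
    rintro z hz hzS ⟨p, hp, hpz⟩
    have hc : (x < p.1 ∧ p.1 < y) ∨ (x < p.2 ∧ p.2 < y) := by
      rw [← hcondφ p, hpz]; exact hz
    have : φ p = p := if_pos hc
    rw [this] at hpz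
    exact hzS (hpz ▸ hp)
  have hxcT : (x, c) ∈ T := by
    refine ⟨hxc, ?_⟩
    simp only
    rw [happ, happ, hσx, hσo c (by omega) (by omega)]
    exact h2
  have hcyT : (c, y) ∈ T := by
    refine ⟨hcy, ?_⟩
    simp only
    rw [happ, happ, hσy, hσo c (by omega) (by omega)]
    exact h1
  have hxyT : (x, y) ∈ T := by
    refine ⟨hxy, ?_⟩
    simp only
    rw [happ, happ, hσx, hσy]
    exact hvxy
  have hxcI : (x, c) ∉ φ '' S := by
    apply hnm
    · right; simp only; omega
    · rintro ⟨_, h⟩; simp only at h; omega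
  have hcyI : (c, y) ∉ φ '' S := by
    apply hnm
    · left; simp only; omega
    · rintro ⟨_, h⟩; simp only at h; omega
  have hxyI : (x, y) ∉ φ '' S := by
    rintro ⟨p, hp, hpz⟩
    have hcz : ¬ ((x < (x, y).1 ∧ (x, y).1 < y) ∨ (x < (x, y).2 ∧ (x, y).2 < y)) := by
      simp only; omega
    have hc : ¬ ((x < p.1 ∧ p.1 < y) ∨ (x < p.2 ∧ p.2 < y)) := by
      rw [← hcondφ p, hpz]; exact hcz
    have ho := hord p hp hc
    have e0 : φ p = (min (σ p.1) (σ p.2), max (σ p.1) (σ p.2)) := if_neg hc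
    rw [e0, min_eq_left ho.le, max_eq_right ho.le] at hpz
    have e1 : σ p.1 = x := congrArg Prod.fst hpz
    have e2 : σ p.2 = y := congrArg Prod.snd hpz
    have f1 : p.1 = y := by rw [← hσσ p.1, e1, hσx]
    have f2 : p.2 = x := by rw [← hσσ p.2, e2, hσy]
    have := hp.1
    omega
  have himfin : (φ '' S).Finite := hSfin.image φ
  have hsub : insert (x, c) (insert (c, y) (insert (x, y) (φ '' S))) ⊆ T := by
    intro z hz
    rcases hz with rfl | hz
    · exact hxcT
    rcases hz with rfl | hz
    · exact hcyT
    rcases hz with rfl | hz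
    · exact hxyT
    · obtain ⟨p, hp, rfl⟩ := hz
      exact hmaps p hp
  have hcard : (insert (x, c) (insert (c, y) (insert (x, y) (φ '' S)))).ncard
      = S.ncard + 3 := by
    rw [Set.ncard_insert_of_notMem ?h1 ((himfin.insert _).insert _),
        Set.ncard_insert_of_notMem ?h2 (himfin.insert _),
        Set.ncard_insert_of_notMem hxyI himfin,
        Set.ncard_image_of_injOn hinj]
    case h1 =>
      simp only [Set.mem_insert_iff]
      push_neg
      refine ⟨?_, ?_, hxcI⟩ <;> intro h <;>
        [exact absurd (congrArg Prod.fst h) (by omega); exact absurd (congrArg Prod.snd h) (by omega)]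
    case h2 =>
      simp only [Set.mem_insert_iff]
      push_neg
      refine ⟨?_, hcyI⟩
      intro h
      exact absurd (congrArg Prod.fst h) (by omega)
  intro hEq
  have hle := Set.ncard_le_ncard hsub hTfin
  rw [hcard] at hle
  have eT : invNum v' = T.ncard := rfl
  have eS : invNum v = S.ncard := rfl
  rw [eT, eS] at hEq
  omega

lemma prod_fix (l : List (Equiv.Perm ℕ)) (c : ℕ) (h : ∀ g ∈ l, g c = c) : l.prod c = c := by
  induction l with
  | nil => rfl
  | cons g t ih =>
    rw [List.prod_cons, Equiv.Perm.mul_apply,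
      ih (fun g hg => h g (List.mem_cons_of_mem _ hg)), h g List.mem_cons_self]

/-- Lemma 3.2: if `w` fixes every `j > n` and
`u = w·t_{a₁b₁}⋯t_{aₘbₘ}` with `a₁ ≤ ⋯ ≤ aₘ ≤ n`, all `bᵢ > n` pairwise distinct,
and each partial product increasing the length by exactly one, then all the `aᵢ`
are equal and `bᵢ = n + i`, i.e. `u = w·t_{a,n+1}·t_{a,n+2}⋯t_{a,n+m}`. -/
theorem stmt_7 (n m : ℕ) (hm : 0 < m) (w u : Equiv.Perm ℕ) (hw0 : w 0 = 0)
    (hfix : ∀ j, n < j → w j = j)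
    (a b : Fin m → ℕ)
    (hmono : ∀ i j : Fin m, i ≤ j → a i ≤ a j)
    (ha : ∀ i, 1 ≤ a i ∧ a i ≤ n) (hb : ∀ i, n < b i)
    (hbinj : Function.Injective b)
    (hlen : ∀ i : Fin m,
      invNum (w * ((List.ofFn fun j : Fin m => Equiv.swap (a j) (b j)).take ((i : ℕ) + 1)).prod)
        = invNum w + ((i : ℕ) + 1))
    (hu : u = w * (List.ofFn fun j : Fin m => Equiv.swap (a j) (b j)).prod) :
    (∀ i : Fin m, a i = a ⟨0, hm⟩) ∧ (∀ i : Fin m, b i = n + (i : ℕ) + 1) := by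
  classical
  set f : Fin m → Equiv.Perm ℕ := fun j => Equiv.swap (a j) (b j) with hf
  set P : ℕ → Equiv.Perm ℕ := fun k => ((List.ofFn f).take k).prod with hP
  have hlength : (List.ofFn f).length = m := List.length_ofFn
  have hstep : ∀ k (hk : k < m), P (k + 1) = P k * Equiv.swap (a ⟨k, hk⟩) (b ⟨k, hk⟩) := by
    intro k hk
    have h0 := List.prod_take_succ (List.ofFn f) k (by rw [hlength]; exact hk)
    rw [hP]
    simp only
    rw [h0, List.getElem_ofFn]
  obtain ⟨ha0pos, ha0n⟩ := ha ⟨0, hm⟩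
  have wlow : ∀ t, t ≤ n → w t ≤ n := by
    intro t ht
    by_contra hgt
    push_neg at hgt
    have h3 : w (w t) = w t := hfix _ hgt
    have h4 := w.injective h3
    omega
  set N := max n (Finset.univ.sup b) with hN
  have hbN : ∀ t, b t ≤ N := fun t => le_max_of_le_right (Finset.le_sup (Finset.mem_univ t))
  have hPfix : ∀ k j, N < j → (w * P k) j = j := by
    intro k j hj
    have hnj : n < j := lt_of_le_of_lt (le_max_left _ _) hj
    have hPj : P k j = j := by
      apply prod_fix
      intro g hg
      obtain ⟨t, rfl⟩ := List.mem_ofFn.mp (List.mem_of_mem_take hg)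
      apply Equiv.swap_apply_of_ne_of_ne
      · have := (ha t).2; omega
      · have := hbN t; omega
    rw [Equiv.Perm.mul_apply, hPj]
    exact hfix j hnj
  have hP0 : P 0 = 1 := rfl
  have hx1 : ∀ k (hk : k < m),
      invNum (w * P k * Equiv.swap (a ⟨k, hk⟩) (b ⟨k, hk⟩)) = invNum (w * P k) + 1 := by
    intro k hk
    have e1 : invNum (w * P (k + 1)) = invNum w + (k + 1) := hlen ⟨k, hk⟩
    have e0 : invNum (w * P k) = invNum w + k := by
      cases k with
      | zero => rw [hP0, mul_one]; omega
      | succ k' => exact hlen ⟨k', by omega⟩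
    rw [hstep k hk, ← mul_assoc] at e1
    omega
  have hC : ∀ t, a ⟨0, hm⟩ < t → t ≤ n → w t < w (a ⟨0, hm⟩) := by
    intro t h1 h2
    by_contra hge
    push_neg at hge
    have hne : w (a ⟨0, hm⟩) ≠ w t := fun h => by have := w.injective h; omega
    have hlt : w (a ⟨0, hm⟩) < w t := lt_of_le_of_ne hge hne
    have hwb : w (b ⟨0, hm⟩) = b ⟨0, hm⟩ := hfix _ (hb _)
    have hk := key w n hfix (a ⟨0, hm⟩) (b ⟨0, hm⟩) t h1
      (lt_of_le_of_lt h2 (hb ⟨0, hm⟩)) hlt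
      (by rw [hwb]; have := wlow t h2; have := hb ⟨0, hm⟩; omega)
    apply hk
    have h5 := hx1 0 hm
    rw [hP0, mul_one] at h5
    exact h5
  have main : ∀ i, ∀ hi : i < m, a ⟨i, hi⟩ = a ⟨0, hm⟩ ∧ b ⟨i, hi⟩ = n + i + 1 := by
    intro i
    induction i using Nat.strong_induction_on with
    | _ i IH =>
    intro hi
    have hPA : ∀ k, k ≤ i → ∀ c, c ≠ a ⟨0, hm⟩ → (∀ j, j < k → c ≠ n + j + 1) →
        P k c = c := by
      intro k
      induction k with
      | zero => intro _ c _ _; rw [hP0]; rfl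
      | succ k ihk =>
        intro hk c hc1 hc2
        have hkm : k < m := by omega
        obtain ⟨e1, e2⟩ := IH k (by omega) hkm
        rw [hstep k hkm, Equiv.Perm.mul_apply, e1, e2,
          Equiv.swap_apply_of_ne_of_ne hc1 (hc2 k (by omega))]
        exact ihk (by omega) c hc1 (fun j hj => hc2 j (by omega))
    have hPB : ∀ k, k ≤ i → 1 ≤ k → P k (n + 1) = a ⟨0, hm⟩ := by
      intro k
      induction k with
      | zero => omega
      | succ k ihk =>
        intro hk _
        have hkm : k < m := by omega
        obtain ⟨e1, e2⟩ := IH k (by omega) hkm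
        rw [hstep k hkm, Equiv.Perm.mul_apply, e1, e2]
        rcases Nat.eq_zero_or_pos k with rfl | hk1
        · rw [show n + 0 + 1 = n + 1 by rfl, Equiv.swap_apply_right, hP0]; rfl
        · rw [Equiv.swap_apply_of_ne_of_ne (by omega) (by omega)]
          exact ihk (by omega) hk1
    have hPC : ∀ k, k ≤ i → 1 ≤ k → P k (a ⟨0, hm⟩) = n + k := by
      intro k
      induction k with
      | zero => omega
      | succ k ihk =>
        intro hk _
        have hkm : k < m := by omega
        obtain ⟨e1, e2⟩ := IH k (by omega) hkm
        rw [hstep k hkm, Equiv.Perm.mul_apply, e1, e2, Equiv.swap_apply_left]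
        exact hPA k (by omega) (n + k + 1) (by omega) (fun j hj => by omega)
    have hain : a ⟨i, hi⟩ ≤ n := (ha ⟨i, hi⟩).2
    have hbne : ∀ j (hj : j < i), b ⟨i, hi⟩ ≠ n + j + 1 := by
      intro j hj hEq
      obtain ⟨_, e2⟩ := IH j hj (by omega)
      have h6 : b ⟨j, by omega⟩ = b ⟨i, hi⟩ := by rw [e2, hEq]
      have h7 := congrArg Fin.val (hbinj h6)
      simp only at h7
      omega
    have hbge : n + i + 1 ≤ b ⟨i, hi⟩ := by
      by_contra hlt'
      push_neg at hlt'
      have hbgt := hb ⟨i, hi⟩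
      exact hbne (b ⟨i, hi⟩ - n - 1) (by omega) (by omega)
    have hVb : (w * P i) (b ⟨i, hi⟩) = b ⟨i, hi⟩ := by
      rw [Equiv.Perm.mul_apply,
        hPA i le_rfl _ (by have := hb ⟨i, hi⟩; omega) (fun j hj => hbne j hj)]
      exact hfix _ (hb _)
    have hVx : (w * P i) (a ⟨i, hi⟩) ≤ n + i := by
      rcases eq_or_ne (a ⟨i, hi⟩) (a ⟨0, hm⟩) with hx | hx
      · rcases Nat.eq_zero_or_pos i with rfl | hi1
        · rw [hx, Equiv.Perm.mul_apply, hP0]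
          have := wlow (a ⟨0, hm⟩) ha0n
          simpa using this
        · rw [hx, Equiv.Perm.mul_apply, hPC i le_rfl hi1, hfix _ (by omega)]
      · rw [Equiv.Perm.mul_apply, hPA i le_rfl _ hx (fun j hj => by omega)]
        have := wlow _ hain
        omega
    have hbi : b ⟨i, hi⟩ = n + i + 1 := by
      by_contra hne
      have hbgt : n + i + 1 < b ⟨i, hi⟩ := lt_of_le_of_ne hbge (Ne.symm hne)
      have hVc : (w * P i) (n + i + 1) = n + i + 1 := by
        rw [Equiv.Perm.mul_apply, hPA i le_rfl _ (by omega) (fun j hj => by omega)]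
        exact hfix _ (by omega)
      exact key (w * P i) N (hPfix i) (a ⟨i, hi⟩) (b ⟨i, hi⟩) (n + i + 1)
        (by omega) hbgt (by rw [hVc]; omega) (by rw [hVc, hVb]; omega) (hx1 i hi)
    have hai : a ⟨i, hi⟩ = a ⟨0, hm⟩ := by
      rcases Nat.eq_zero_or_pos i with rfl | hi1
      · rfl
      by_contra hne
      have hle0 : a ⟨0, hm⟩ ≤ a ⟨i, hi⟩ := hmono ⟨0, hm⟩ ⟨i, hi⟩ (by simp [Fin.le_def])
      have hgt : a ⟨0, hm⟩ < a ⟨i, hi⟩ := lt_of_le_of_ne hle0 (Ne.symm hne)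
      have hVx' : (w * P i) (a ⟨i, hi⟩) = w (a ⟨i, hi⟩) := by
        rw [Equiv.Perm.mul_apply, hPA i le_rfl _ hne (fun j hj => by omega)]
      have hVc : (w * P i) (n + 1) = w (a ⟨0, hm⟩) := by
        rw [Equiv.Perm.mul_apply, hPB i le_rfl hi1]
      have hVy : (w * P i) (n + i + 1) = n + i + 1 := by
        rw [Equiv.Perm.mul_apply, hPA i le_rfl _ (by omega) (fun j hj => by omega)]
        exact hfix _ (by omega)
      have h1 := hC _ hgt hain
      have h2 : w (a ⟨0, hm⟩) ≤ n := wlow _ ha0n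
      have hk := key (w * P i) N (hPfix i) (a ⟨i, hi⟩) (n + i + 1) (n + 1)
        (by omega) (by omega) (by rw [hVx', hVc]; exact h1) (by rw [hVc, hVy]; omega)
      apply hk
      have h5 := hx1 i hi
      rw [hbi] at h5
      exact h5
    exact ⟨hai, hbi⟩
  refine ⟨fun i => ?_, fun i => ?_⟩
  · have h := (main i.1 i.2).1
    rwa [Fin.eta] at h
  · have h := (main i.1 i.2).2
    rwa [Fin.eta] at h
end

section
/- (Lemma 3.6 of the paper, special configuration.) Let w be a permutation of the positive integers fixing every j > k+1. Suppose u_1 = w·t_{a,k+1}·t_{a,k+2}⋯t_{a,k+m} and u_2 = w·t_{a_1,k+1}·t_{a,k+2}⋯t_{a,k+m} with a_1 ≠ a, a_1, a ≤ k, and with each partial product increasing the inversion number by exactly 1 at every step. Then there is no permutation v and no p ≥ 1 such that v is obtained from u_1 by a sequence of p transpositions t_{c_i d_i} with c_i ≤ k < d_i, d_i distinct, c_i weakly increasing, each step increasing length by 1, and simultaneously v is obtained from u_2 by such a sequence of p transpositions. -/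
open Equiv Finset

lemma fix_self (π : Perm ℕ) (N : ℕ) (hfix : ∀ z, N ≤ z → π z = z) :
    ∀ z, N ≤ π z → π z = z := fun z h => π.injective (hfix _ h)

lemma apply_lt (π : Perm ℕ) (N : ℕ) (hfix : ∀ z, N ≤ z → π z = z) :
    ∀ z, z < N → π z < N := by
  intro z hz
  by_contra h
  push_neg at h
  have := fix_self π N hfix z h
  omega

lemma invNum_eq_card (π : Perm ℕ) (N : ℕ) (hfix : ∀ z, N ≤ z → π z = z) :
    invNum π = ((range N ×ˢ range N).filter fun pq => pq.1 < pq.2 ∧ π pq.2 < π pq.1).card := by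
  rw [invNum, ← Set.ncard_coe_finset]
  congr 1
  ext ⟨p, q⟩
  simp only [Finset.coe_filter, Set.mem_setOf_eq, mem_product, mem_range]
  constructor
  · rintro ⟨h1, h2⟩
    have hq : q < N := by
      by_contra hq
      push_neg at hq
      have hπq : π q = q := hfix q hq
      have hp2 : N ≤ π p := by omega
      have := fix_self π N hfix p hp2
      omega
    exact ⟨⟨by omega, hq⟩, h1, h2⟩
  · tauto

lemma card_filter_split {α : Type*} (T : Finset α) (P C : α → Prop)
    [DecidablePred P] [DecidablePred C] :
    (T.filter P).card
      = (T.filter fun t => P t ∧ C t).card + (T.filter fun t => P t ∧ ¬ C t).card := by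
  rw [← Finset.filter_filter, ← Finset.filter_filter,
    Finset.card_filter_add_card_filter_not]

-- characterization of order-flipping pairs
lemma swap_flip (x y : ℕ) (hxy : x < y) (p q : ℕ) (hpq : p < q) :
    (¬ (Equiv.swap x y p < Equiv.swap x y q)) ↔
      ((p = x ∧ q = y) ∨ (p = x ∧ x < q ∧ q < y) ∨ (x < p ∧ p < y ∧ q = y)) := by
  by_cases hp1 : p = x <;> by_cases hp2 : p = y <;> by_cases hq1 : q = x <;>
    by_cases hq2 : q = y <;>
    simp_all [Equiv.swap_apply_of_ne_of_ne, Equiv.swap_apply_left, Equiv.swap_apply_right] <;>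
    omega

lemma swap_step (π : Perm ℕ) (N x y : ℕ) (hfixN : ∀ z, N ≤ z → π z = z) (hxy : x < y)
    (h : invNum (π * Equiv.swap x y) = invNum π + 1) :
    π x < π y ∧ ∀ z, x < z → z < y → ¬(π x < π z ∧ π z < π y) := by
  classical
  set M := max N (y+1) with hM
  set s := Equiv.swap x y with hs
  have hfix : ∀ z, M ≤ z → π z = z := fun z hz => hfixN z (le_trans (le_max_left _ _) hz)
  have hx : x < M := by omega
  have hy : y < M := by omega
  have hsM : ∀ z, z < M → s z < M := by
    intro z hz
    rcases eq_or_ne z x with rfl | h1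
    · rw [hs, Equiv.swap_apply_left]; omega
    rcases eq_or_ne z y with rfl | h2
    · rw [hs, Equiv.swap_apply_right]; omega
    · rw [hs, Equiv.swap_apply_of_ne_of_ne h1 h2]; omega
  have hfix' : ∀ z, M ≤ z → (π * s) z = z := by
    intro z hz
    have h1 : z ≠ x := by omega
    have h2 : z ≠ y := by omega
    rw [Equiv.Perm.mul_apply, hs, Equiv.swap_apply_of_ne_of_ne h1 h2]
    exact hfix z hz
  rw [invNum_eq_card π M hfix, invNum_eq_card (π * s) M hfix'] at h
  set R := range M ×ˢ range M with hR
  -- reindex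
  have hreindex :
      ((R.filter fun pq => pq.1 < pq.2 ∧ (π * s) pq.2 < (π * s) pq.1)).card
        = (R.filter fun pq => s pq.1 < s pq.2 ∧ π pq.2 < π pq.1).card := by
    apply Finset.card_bij' (fun pq _ => (s pq.1, s pq.2)) (fun pq _ => (s pq.1, s pq.2))
    · intro pq hpq
      simp only [mem_filter, hR, mem_product, mem_range] at hpq ⊢
      obtain ⟨⟨hp, hq⟩, h1, h2⟩ := hpq
      refine ⟨⟨hsM _ hp, hsM _ hq⟩, ?_, ?_⟩
      · simpa [hs, Equiv.swap_apply_self] using h1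
      · simpa [Equiv.Perm.mul_apply] using h2
    · intro pq hpq
      simp only [mem_filter, hR, mem_product, mem_range] at hpq ⊢
      obtain ⟨⟨hp, hq⟩, h1, h2⟩ := hpq
      refine ⟨⟨hsM _ hp, hsM _ hq⟩, ?_, ?_⟩
      · simpa [hs, Equiv.swap_apply_self] using h1
      · simpa [Equiv.Perm.mul_apply, hs, Equiv.swap_apply_self] using h2
    · intro pq _; simp [hs, Equiv.swap_apply_self]
    · intro pq _; simp [hs, Equiv.swap_apply_self]
  rw [hreindex] at h
  have hsplit1 := card_filter_split R (fun pq => s pq.1 < s pq.2 ∧ π pq.2 < π pq.1)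
    (fun pq => pq.1 < pq.2)
  have hsplit2 := card_filter_split R (fun pq => pq.1 < pq.2 ∧ π pq.2 < π pq.1)
    (fun pq => s pq.1 < s pq.2)
  have hcommon : (R.filter fun pq => (s pq.1 < s pq.2 ∧ π pq.2 < π pq.1) ∧ pq.1 < pq.2)
      = (R.filter fun pq => (pq.1 < pq.2 ∧ π pq.2 < π pq.1) ∧ s pq.1 < s pq.2) := by
    apply Finset.filter_congr
    intro pq _
    constructor <;> intro hh <;> tauto
  rw [hsplit1, hsplit2, hcommon] at h
  set G1 := R.filter fun pq => (s pq.1 < s pq.2 ∧ π pq.2 < π pq.1) ∧ ¬ pq.1 < pq.2 with hG1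
  set G2 := R.filter fun pq => (pq.1 < pq.2 ∧ π pq.2 < π pq.1) ∧ ¬ s pq.1 < s pq.2 with hG2
  have hG : G1.card = G2.card + 1 := by omega
  clear h hsplit1 hsplit2 hcommon hreindex
  have hinjL : Function.Injective (fun t : ℕ => ((x, t) : ℕ × ℕ)) :=
    fun a b hab => (Prod.ext_iff.mp hab).2
  have hinjR : Function.Injective (fun t : ℕ => ((t, y) : ℕ × ℕ)) :=
    fun a b hab => (Prod.ext_iff.mp hab).1
  have hinjL' : Function.Injective (fun t : ℕ => ((t, x) : ℕ × ℕ)) :=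
    fun a b hab => (Prod.ext_iff.mp hab).1
  have hinjR' : Function.Injective (fun t : ℕ => ((y, t) : ℕ × ℕ)) :=
    fun a b hab => (Prod.ext_iff.mp hab).2
  have hG2eq : G2 = ((if π y < π x then ({(x, y)} : Finset (ℕ × ℕ)) else ∅)
      ∪ ((Ioo x y).filter (fun t => π t < π x)).image (fun t => (x, t)))
      ∪ ((Ioo x y).filter (fun t => π y < π t)).image (fun t => (t, y)) := by
    ext ⟨p, q⟩
    constructor
    · intro hmem
      rw [hG2, mem_filter, hR, mem_product, mem_range, mem_range] at hmem
      obtain ⟨⟨hp, hq⟩, ⟨hpq, hinv⟩, hflip⟩ := hmem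
      rw [mem_union, mem_union]
      rcases (swap_flip x y hxy p q hpq).mp hflip with ⟨rfl, rfl⟩ | ⟨rfl, h2, h3⟩ | ⟨h2, h3, rfl⟩
      · left; left; rw [if_pos hinv]; exact mem_singleton_self _
      · left; right; rw [mem_image]
        exact ⟨q, mem_filter.mpr ⟨mem_Ioo.mpr ⟨h2, h3⟩, hinv⟩, rfl⟩
      · right; rw [mem_image]
        exact ⟨p, mem_filter.mpr ⟨mem_Ioo.mpr ⟨h2, h3⟩, hinv⟩, rfl⟩
    · intro hmem
      rw [mem_union, mem_union] at hmem
      rw [hG2, mem_filter, hR, mem_product, mem_range, mem_range]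
      dsimp only
      rcases hmem with (hE | hE) | hE
      · by_cases hc : π y < π x
        · rw [if_pos hc, mem_singleton] at hE
          injection hE with e1 e2; rw [e1, e2]
          exact ⟨⟨by omega, by omega⟩, ⟨hxy, hc⟩,
            (swap_flip x y hxy x y hxy).mpr (Or.inl ⟨rfl, rfl⟩)⟩
        · rw [if_neg hc] at hE; exact absurd hE (notMem_empty _)
      · rw [mem_image] at hE
        obtain ⟨t, ht, heq⟩ := hE
        rw [mem_filter, mem_Ioo] at ht
        obtain ⟨⟨h2, h3⟩, hinv⟩ := ht
        injection heq with e1 e2; subst e1; subst e2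
        exact ⟨⟨by omega, by omega⟩, ⟨h2, hinv⟩,
          (swap_flip x y hxy x t h2).mpr (Or.inr (Or.inl ⟨rfl, h2, h3⟩))⟩
      · rw [mem_image] at hE
        obtain ⟨t, ht, heq⟩ := hE
        rw [mem_filter, mem_Ioo] at ht
        obtain ⟨⟨h2, h3⟩, hinv⟩ := ht
        injection heq with e1 e2; subst e1; subst e2
        exact ⟨⟨by omega, by omega⟩, ⟨h3, hinv⟩,
          (swap_flip x y hxy t y h3).mpr (Or.inr (Or.inr ⟨h2, h3, rfl⟩))⟩
  have hG1eq : G1 = ((if π x < π y then ({(y, x)} : Finset (ℕ × ℕ)) else ∅)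
      ∪ ((Ioo x y).filter (fun t => π x < π t)).image (fun t => (t, x)))
      ∪ ((Ioo x y).filter (fun t => π t < π y)).image (fun t => (y, t)) := by
    ext ⟨p, q⟩
    constructor
    · intro hmem
      rw [hG1, mem_filter, hR, mem_product, mem_range, mem_range] at hmem
      obtain ⟨⟨hp, hq⟩, ⟨hflip, hinv⟩, hnpq⟩ := hmem
      have hqp : q < p := by
        rcases lt_trichotomy p q with h' | h' | h'
        · exact absurd h' hnpq
        · exfalso; rw [h'] at hflip; exact lt_irrefl _ hflip
        · exact h'
      have hnflip : ¬ (s q < s p) := lt_asymm hflip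
      rw [mem_union, mem_union]
      rcases (swap_flip x y hxy q p hqp).mp hnflip with ⟨rfl, rfl⟩ | ⟨rfl, h2, h3⟩ | ⟨h2, h3, rfl⟩
      · left; left; rw [if_pos hinv]; exact mem_singleton_self _
      · left; right; rw [mem_image]
        exact ⟨p, mem_filter.mpr ⟨mem_Ioo.mpr ⟨h2, h3⟩, hinv⟩, rfl⟩
      · right; rw [mem_image]
        exact ⟨q, mem_filter.mpr ⟨mem_Ioo.mpr ⟨h2, h3⟩, hinv⟩, rfl⟩
    · intro hmem
      rw [mem_union, mem_union] at hmem
      rw [hG1, mem_filter, hR, mem_product, mem_range, mem_range]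
      dsimp only
      rcases hmem with (hE | hE) | hE
      · by_cases hc : π x < π y
        · rw [if_pos hc, mem_singleton] at hE
          injection hE with e1 e2; rw [e1, e2]
          refine ⟨⟨by omega, by omega⟩, ⟨?_, hc⟩, by omega⟩
          rw [hs, Equiv.swap_apply_right, Equiv.swap_apply_left]; exact hxy
        · rw [if_neg hc] at hE; exact absurd hE (notMem_empty _)
      · rw [mem_image] at hE
        obtain ⟨t, ht, heq⟩ := hE
        rw [mem_filter, mem_Ioo] at ht
        obtain ⟨⟨h2, h3⟩, hinv⟩ := ht
        injection heq with e1 e2; subst e1; subst e2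
        refine ⟨⟨by omega, by omega⟩, ⟨?_, hinv⟩, by omega⟩
        rw [hs, Equiv.swap_apply_of_ne_of_ne (by omega : t ≠ x) (by omega : t ≠ y),
          Equiv.swap_apply_left]
        exact h3
      · rw [mem_image] at hE
        obtain ⟨t, ht, heq⟩ := hE
        rw [mem_filter, mem_Ioo] at ht
        obtain ⟨⟨h2, h3⟩, hinv⟩ := ht
        injection heq with e1 e2; subst e1; subst e2
        refine ⟨⟨by omega, by omega⟩, ⟨?_, hinv⟩, by omega⟩
        rw [hs, Equiv.swap_apply_right,
          Equiv.swap_apply_of_ne_of_ne (by omega : t ≠ x) (by omega : t ≠ y)]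
        exact h2
  have hdisjA : ∀ (E : Finset (ℕ × ℕ)), (∀ pr ∈ E, pr.2 = x ∨ pr.1 = y) →
      ∀ (F : Finset (ℕ × ℕ)), True → True := fun _ _ _ _ => trivial
  have hcard2 : G2.card = (if π y < π x then 1 else 0)
      + ((Ioo x y).filter (fun t => π t < π x)).card
      + ((Ioo x y).filter (fun t => π y < π t)).card := by
    rw [hG2eq, Finset.card_union_of_disjoint, Finset.card_union_of_disjoint,
      Finset.card_image_of_injective _ hinjL, Finset.card_image_of_injective _ hinjR]
    · by_cases hc : π y < π x <;> simp [hc]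
    · rw [Finset.disjoint_left]
      rintro ⟨p, q⟩ hp hq
      rw [mem_image] at hq
      obtain ⟨t, ht, heq⟩ := hq
      rw [mem_filter, mem_Ioo] at ht
      injection heq with e1 e2
      by_cases hc : π y < π x
      · rw [if_pos hc, mem_singleton] at hp
        injection hp with e1' e2'
        omega
      · rw [if_neg hc] at hp; exact absurd hp (notMem_empty _)
    · rw [Finset.disjoint_left]
      rintro ⟨p, q⟩ hp hq
      rw [mem_image] at hq
      obtain ⟨t, ht, heq⟩ := hq
      rw [mem_filter, mem_Ioo] at ht
      injection heq with e1 e2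
      rw [mem_union] at hp
      rcases hp with hp | hp
      · by_cases hc : π y < π x
        · rw [if_pos hc, mem_singleton] at hp
          injection hp with e1' e2'
          omega
        · rw [if_neg hc] at hp; exact absurd hp (notMem_empty _)
      · rw [mem_image] at hp
        obtain ⟨t', ht', heq'⟩ := hp
        rw [mem_filter, mem_Ioo] at ht'
        injection heq' with e1' e2'
        omega
  have hcard1 : G1.card = (if π x < π y then 1 else 0)
      + ((Ioo x y).filter (fun t => π x < π t)).card
      + ((Ioo x y).filter (fun t => π t < π y)).card := by
    rw [hG1eq, Finset.card_union_of_disjoint, Finset.card_union_of_disjoint,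
      Finset.card_image_of_injective _ hinjL', Finset.card_image_of_injective _ hinjR']
    · by_cases hc : π x < π y <;> simp [hc]
    · rw [Finset.disjoint_left]
      rintro ⟨p, q⟩ hp hq
      rw [mem_image] at hq
      obtain ⟨t, ht, heq⟩ := hq
      rw [mem_filter, mem_Ioo] at ht
      injection heq with e1 e2
      by_cases hc : π x < π y
      · rw [if_pos hc, mem_singleton] at hp
        injection hp with e1' e2'
        omega
      · rw [if_neg hc] at hp; exact absurd hp (notMem_empty _)
    · rw [Finset.disjoint_left]
      rintro ⟨p, q⟩ hp hq
      rw [mem_image] at hq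
      obtain ⟨t, ht, heq⟩ := hq
      rw [mem_filter, mem_Ioo] at ht
      injection heq with e1 e2
      rw [mem_union] at hp
      rcases hp with hp | hp
      · by_cases hc : π x < π y
        · rw [if_pos hc, mem_singleton] at hp
          injection hp with e1' e2'
          omega
        · rw [if_neg hc] at hp; exact absurd hp (notMem_empty _)
      · rw [mem_image] at hp
        obtain ⟨t', ht', heq'⟩ := hp
        rw [mem_filter, mem_Ioo] at ht'
        injection heq' with e1' e2'
        omega
  have hcompl1 : ((Ioo x y).filter (fun t => π x < π t)).card
      + ((Ioo x y).filter (fun t => π t < π x)).card = (Ioo x y).card := by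
    have hcong : (Ioo x y).filter (fun t => ¬ π x < π t)
        = (Ioo x y).filter (fun t => π t < π x) := by
      apply Finset.filter_congr
      intro t ht
      rw [mem_Ioo] at ht
      have hne' : π t ≠ π x := π.injective.ne (by omega)
      constructor <;> intro <;> omega
    rw [← hcong, Finset.card_filter_add_card_filter_not]
  have hcompl2 : ((Ioo x y).filter (fun t => π t < π y)).card
      + ((Ioo x y).filter (fun t => π y < π t)).card = (Ioo x y).card := by
    have hcong : (Ioo x y).filter (fun t => ¬ π t < π y)
        = (Ioo x y).filter (fun t => π y < π t) := by
      apply Finset.filter_congr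
      intro t ht
      rw [mem_Ioo] at ht
      have hne' : π t ≠ π y := π.injective.ne (by omega)
      constructor <;> intro <;> omega
    rw [← hcong, Finset.card_filter_add_card_filter_not]
  have hlt : π x < π y := by
    by_contra hxyv
    have hne' : π x ≠ π y := π.injective.ne (by omega)
    have hyx : π y < π x := by omega
    rw [hcard1, hcard2, if_neg hxyv, if_pos hyx] at hG
    have hdisj : Disjoint ((Ioo x y).filter (fun t => π x < π t))
        ((Ioo x y).filter (fun t => π t < π y)) := by
      rw [Finset.disjoint_left]
      intro t ht1 ht2
      rw [mem_filter] at ht1 ht2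
      omega
    have hle : ((Ioo x y).filter (fun t => π x < π t)).card
        + ((Ioo x y).filter (fun t => π t < π y)).card ≤ (Ioo x y).card := by
      rw [← Finset.card_union_of_disjoint hdisj]
      exact Finset.card_le_card (Finset.union_subset (Finset.filter_subset _ _)
        (Finset.filter_subset _ _))
    omega
  refine ⟨hlt, ?_⟩
  rintro z hz1 hz2 ⟨hb1, hb2⟩
  rw [hcard1, hcard2, if_pos hlt, if_neg (by omega)] at hG
  have hunion : (Ioo x y).filter (fun t => π x < π t)
      ∪ (Ioo x y).filter (fun t => π t < π y) = Ioo x y := by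
    apply Finset.Subset.antisymm
    · exact Finset.union_subset (Finset.filter_subset _ _) (Finset.filter_subset _ _)
    · intro t ht
      have ht' := ht
      rw [mem_Ioo] at ht'
      rw [mem_union, mem_filter, mem_filter]
      have hne1 : π t ≠ π x := π.injective.ne (by omega)
      by_cases hc : π x < π t
      · left; exact ⟨ht, hc⟩
      · right; exact ⟨ht, by omega⟩
  have hiu := Finset.card_union_add_card_inter ((Ioo x y).filter (fun t => π x < π t))
    ((Ioo x y).filter (fun t => π t < π y))
  rw [hunion] at hiu
  have hzmem : z ∈ (Ioo x y).filter (fun t => π x < π t)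
      ∩ (Ioo x y).filter (fun t => π t < π y) := by
    rw [mem_inter, mem_filter, mem_filter, mem_Ioo]
    exact ⟨⟨⟨hz1, hz2⟩, hb1⟩, ⟨⟨hz1, hz2⟩, hb2⟩⟩
  have hpos : 0 < (((Ioo x y).filter (fun t => π x < π t))
      ∩ ((Ioo x y).filter (fun t => π t < π y))).card := Finset.card_pos.mpr ⟨z, hzmem⟩
  omega

section Chain

variable {p k : ℕ} (c d : Fin p → ℕ)

/-- prefix product of the first `i` swaps -/
def PP (i : ℕ) : Perm ℕ :=
  ((List.ofFn fun j => Equiv.swap (c j) (d j)).take i).prod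

lemma PP_zero : PP c d 0 = 1 := by simp [PP]

lemma PP_succ (i : Fin p) : PP c d ((i : ℕ) + 1) = PP c d i * Equiv.swap (c i) (d i) := by
  rw [PP, PP, List.take_succ]
  have hlen : (i : ℕ) < (List.ofFn fun j => Equiv.swap (c j) (d j)).length := by
    simp [i.isLt]
  rw [List.prod_append]
  congr 1
  rw [List.getElem?_eq_getElem hlen]
  simp

lemma PP_apply_succ (i : Fin p) (x : ℕ) :
    PP c d ((i : ℕ) + 1) x = PP c d i (Equiv.swap (c i) (d i) x) := by
  rw [PP_succ]; rfl

lemma PP_fix (i : ℕ) (hi : i ≤ p) (x : ℕ)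
    (hx : ∀ j : Fin p, (j : ℕ) < i → x ≠ c j ∧ x ≠ d j) : PP c d i x = x := by
  induction i with
  | zero => rw [PP_zero]; rfl
  | succ n ih =>
    have hn : n < p := hi
    rw [PP_apply_succ c d ⟨n, hn⟩ x]
    have hx' := hx ⟨n, hn⟩ (by simp)
    rw [Equiv.swap_apply_of_ne_of_ne hx'.1 hx'.2]
    exact ih (le_of_lt hn) (fun j hj => hx j (by omega))

variable (hk : ∀ i, c i ≤ k ∧ k < d i) (hd : Function.Injective d)

lemma PP_top : PP c d p = (List.ofFn fun j => Equiv.swap (c j) (d j)).prod := by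
  rw [PP, List.take_of_length_le (by simp)]

include hk hd in
lemma PP_fix_d (i : Fin p) (t : ℕ) (ht : t ≤ (i : ℕ)) : PP c d t (d i) = d i := by
  apply PP_fix c d t (le_trans ht (le_of_lt i.isLt))
  intro j hj
  constructor
  · have := (hk i).2; have := (hk j).1; omega
  · intro hcon
    have : j = i := hd hcon.symm
    omega

include hk hd in
lemma PP_small (i : ℕ) (hi : i ≤ p) (x : ℕ) (hx : x ≤ k) :
    PP c d i x = x ∨ ∃ j : Fin p, (j : ℕ) < i ∧ PP c d i x = d j ∧ c j = x := by
  induction i with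
  | zero => left; rw [PP_zero]; rfl
  | succ n ih =>
    have hn : n < p := hi
    rw [PP_apply_succ c d ⟨n, hn⟩ x]
    by_cases hc : x = c ⟨n, hn⟩
    · right
      rw [← hc, Equiv.swap_apply_left]
      refine ⟨⟨n, hn⟩, by simp, ?_, hc.symm⟩
      exact PP_fix_d c d hk hd ⟨n, hn⟩ n le_rfl
    · have hne2 : x ≠ d ⟨n, hn⟩ := by have := (hk ⟨n, hn⟩).2; omega
      rw [Equiv.swap_apply_of_ne_of_ne hc hne2]
      rcases ih (le_of_lt hn) with h | ⟨j, hj1, hj2, hj3⟩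
      · left; exact h
      · right; exact ⟨j, by omega, hj2, hj3⟩

include hk hd in
lemma PP_d (i : Fin p) : PP c d p (d i) = PP c d (i : ℕ) (c i) := by
  have key : ∀ t : ℕ, (i : ℕ) < t → t ≤ p → PP c d t (d i) = PP c d (i : ℕ) (c i) := by
    intro t
    induction t with
    | zero => omega
    | succ n ih =>
      intro h1 h2
      have hn : n < p := h2
      rw [PP_apply_succ c d ⟨n, hn⟩]
      rcases Nat.lt_or_ge (i : ℕ) n with hlt | hge
      · have hne1 : d i ≠ c ⟨n, hn⟩ := by
          have := (hk i).2; have := (hk ⟨n, hn⟩).1; omega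
        have hne2 : d i ≠ d ⟨n, hn⟩ := by
          intro hcon
          have : i = ⟨n, hn⟩ := hd hcon
          have := congrArg Fin.val this
          simp at this; omega
        rw [Equiv.swap_apply_of_ne_of_ne hne1 hne2]
        exact ih hlt (le_of_lt hn)
      · have : (i : ℕ) = n := by omega
        have hii : i = ⟨n, hn⟩ := Fin.ext this
        rw [← hii, Equiv.swap_apply_right]
  exact key p i.isLt le_rfl


variable (u : Perm ℕ) (Nu : ℕ)

/-- a bound above which `u * PP c d i` is the identity -/
def NB : ℕ := max Nu ((Finset.univ.sup fun j : Fin p => max (c j) (d j)) + 1)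

lemma PP_fix_large (i : ℕ) (z : ℕ) (hz : NB c d Nu ≤ z) : PP c d i z = z := by
  rcases le_or_gt i p with hi | hi
  · apply PP_fix c d i hi
    intro j _
    have hle : max (c j) (d j) ≤ Finset.univ.sup fun j : Fin p => max (c j) (d j) :=
      Finset.le_sup (f := fun j : Fin p => max (c j) (d j)) (Finset.mem_univ j)
    have : NB c d Nu ≥ (Finset.univ.sup fun j : Fin p => max (c j) (d j)) + 1 :=
      le_max_right _ _
    omega
  · have : (List.ofFn fun j : Fin p => Equiv.swap (c j) (d j)).take i
        = (List.ofFn fun j : Fin p => Equiv.swap (c j) (d j)).take p := by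
      rw [List.take_of_length_le, List.take_of_length_le] <;> simp <;> omega
    rw [PP, this, ← PP]
    apply PP_fix c d p le_rfl
    intro j _
    have hle : max (c j) (d j) ≤ Finset.univ.sup fun j : Fin p => max (c j) (d j) :=
      Finset.le_sup (f := fun j : Fin p => max (c j) (d j)) (Finset.mem_univ j)
    have : NB c d Nu ≥ (Finset.univ.sup fun j : Fin p => max (c j) (d j)) + 1 :=
      le_max_right _ _
    omega

variable (hNu : ∀ z, Nu ≤ z → u z = z)

include hNu in
lemma uPP_fix (i : ℕ) : ∀ z, NB c d Nu ≤ z → (u * PP c d i) z = z := by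
  intro z hz
  rw [Equiv.Perm.mul_apply, PP_fix_large c d Nu i z hz]
  exact hNu z (le_trans (le_max_left _ _) hz)

variable (hstep : ∀ i : Fin p,
    invNum (u * PP c d ((i : ℕ) + 1)) = invNum u + ((i : ℕ) + 1))

include hstep in
lemma invNum_PP (i : ℕ) (hi : i ≤ p) : invNum (u * PP c d i) = invNum u + i := by
  cases i with
  | zero => rw [PP_zero]; simp
  | succ n => exact hstep ⟨n, hi⟩

include hstep in
lemma hstep' (i : Fin p) :
    invNum ((u * PP c d (i : ℕ)) * Equiv.swap (c i) (d i))
      = invNum (u * PP c d (i : ℕ)) + 1 := by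
  rw [mul_assoc, ← PP_succ c d i, invNum_PP c d u hstep ((i : ℕ) + 1) i.isLt,
    invNum_PP c d u hstep (i : ℕ) (le_of_lt i.isLt)]
  omega

include hk hd hNu hstep in
lemma step_lt (i : Fin p) : u (PP c d (i : ℕ) (c i)) < u (d i) := by
  have h := (swap_step (u * PP c d (i : ℕ)) (NB c d Nu) (c i) (d i)
    (uPP_fix c d u Nu hNu (i : ℕ)) (by have := hk i; omega)
    (hstep' c d u hstep i)).1
  rw [Equiv.Perm.mul_apply, Equiv.Perm.mul_apply,
    PP_fix_d c d hk hd i (i : ℕ) le_rfl] at h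
  exact h

include hk hd hNu hstep in
lemma chain_L4 (i : Fin p) : u (PP c d p (d i)) < u (d i) := by
  rw [PP_d c d hk hd i]
  exact step_lt c d hk hd u Nu hNu hstep i

include hk hd in
lemma chain_L3 (i : Fin p) : PP c d p (d i) = c i ∨
    ∃ j : Fin p, (j : ℕ) < (i : ℕ) ∧ PP c d p (d i) = d j ∧ c j = c i := by
  rw [PP_d c d hk hd i]
  exact PP_small c d hk hd (i : ℕ) (le_of_lt i.isLt) (c i) (hk i).1

include hk hd hNu hstep in
lemma chain_L5 (x : ℕ) (hx : x ≤ k) : u x ≤ u (PP c d p x) := by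
  suffices h : ∀ i : ℕ, i ≤ p → u x ≤ u (PP c d i x) by exact h p le_rfl
  intro i
  induction i with
  | zero => rw [PP_zero]; simp
  | succ n ih =>
    intro hn1
    have hn : n < p := hn1
    rw [PP_apply_succ c d ⟨n, hn⟩ x]
    by_cases hc : x = c ⟨n, hn⟩
    · rw [← hc, Equiv.swap_apply_left, hc, PP_fix_d c d hk hd ⟨n, hn⟩ n le_rfl]
      have h1 := step_lt c d hk hd u Nu hNu hstep ⟨n, hn⟩
      have h2 := ih (le_of_lt hn)
      rw [hc] at h2
      have hval : ((⟨n, hn⟩ : Fin p) : ℕ) = n := rfl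
      rw [hval] at h1
      omega
    · have hne2 : x ≠ d ⟨n, hn⟩ := by have := (hk ⟨n, hn⟩).2; omega
      rw [Equiv.swap_apply_of_ne_of_ne hc hne2]
      exact ih (le_of_lt hn)

include hk hd in
lemma chain_moved (i : Fin p) : PP c d p (d i) ≠ d i := by
  rcases chain_L3 c d hk hd i with h | ⟨j, hj1, hj2, _⟩
  · have := (hk i).1; have := (hk i).2; omega
  · rw [hj2]
    intro hcon
    have : j = i := hd hcon
    omega

include hk in
lemma chain_fix_big (x : ℕ) (hx : k < x) (hnd : ∀ j, d j ≠ x) : PP c d p x = x := by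
  apply PP_fix c d p le_rfl
  intro j _
  have := (hk j).1
  exact ⟨by omega, fun hcon => hnd j hcon.symm⟩

end Chain

/-- `PieriChain k p u v` : `v` is obtained from `u` by a sequence of `p`
transpositions `t_{cᵢdᵢ}` with `1 ≤ cᵢ ≤ k < dᵢ`, `dᵢ` pairwise distinct, `cᵢ`
weakly increasing, each step increasing the inversion number by exactly `1`. -/
def PieriChain (k p : ℕ) (u v : Equiv.Perm ℕ) : Prop :=
  ∃ c d : Fin p → ℕ,
    (∀ i j : Fin p, i ≤ j → c i ≤ c j) ∧
    (∀ i, 1 ≤ c i ∧ c i ≤ k ∧ k < d i) ∧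
    Function.Injective d ∧
    (∀ i : Fin p,
      invNum (u * ((List.ofFn fun j : Fin p => Equiv.swap (c j) (d j)).take ((i : ℕ) + 1)).prod)
        = invNum u + ((i : ℕ) + 1)) ∧
    v = u * (List.ofFn fun j : Fin p => Equiv.swap (c j) (d j)).prod

lemma main1 (k a a₁ : ℕ) (h1a : 1 ≤ a) (hak : a ≤ k) (h1a1 : 1 ≤ a₁) (ha1k : a₁ ≤ k)
    (hne : a₁ ≠ a) (w : Equiv.Perm ℕ) (hwfix : ∀ z, k + 2 ≤ z → w z = z)
    (hl1 : invNum (w * Equiv.swap a (k + 1)) = invNum w + 1)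
    (hl2 : invNum (w * Equiv.swap a₁ (k + 1)) = invNum w + 1)
    (p : ℕ) (v : Equiv.Perm ℕ)
    (hch1 : PieriChain k p (w * Equiv.swap a (k + 1)) v)
    (hch2 : PieriChain k p (w * Equiv.swap a₁ (k + 1)) v) : False := by
  classical
  set u₁ := w * Equiv.swap a (k + 1) with hu₁
  set u₂ := w * Equiv.swap a₁ (k + 1) with hu₂
  -- basic values
  have hwb : ∀ z, z ≤ k + 1 → w z ≤ k + 1 := by
    intro z hz
    by_contra hcon
    push_neg at hcon
    have h1 : w (w z) = w z := hwfix (w z) (by omega)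
    have h2 := w.injective h1
    omega
  have hu₁a : u₁ a = w (k + 1) := by
    rw [hu₁, Equiv.Perm.mul_apply, Equiv.swap_apply_left]
  have hu₁k : u₁ (k + 1) = w a := by
    rw [hu₁, Equiv.Perm.mul_apply, Equiv.swap_apply_right]
  have hu₁o : ∀ x, x ≠ a → x ≠ k + 1 → u₁ x = w x := by
    intro x hx1 hx2
    rw [hu₁, Equiv.Perm.mul_apply, Equiv.swap_apply_of_ne_of_ne hx1 hx2]
  have hu₂a : u₂ a₁ = w (k + 1) := by
    rw [hu₂, Equiv.Perm.mul_apply, Equiv.swap_apply_left]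
  have hu₂k : u₂ (k + 1) = w a₁ := by
    rw [hu₂, Equiv.Perm.mul_apply, Equiv.swap_apply_right]
  have hu₂o : ∀ x, x ≠ a₁ → x ≠ k + 1 → u₂ x = w x := by
    intro x hx1 hx2
    rw [hu₂, Equiv.Perm.mul_apply, Equiv.swap_apply_of_ne_of_ne hx1 hx2]
  have hu₁big : ∀ z, k + 2 ≤ z → u₁ z = z := by
    intro z hz
    rw [hu₁o z (by omega) (by omega)]
    exact hwfix z hz
  have hu₂big : ∀ z, k + 2 ≤ z → u₂ z = z := by
    intro z hz
    rw [hu₂o z (by omega) (by omega)]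
    exact hwfix z hz
  have hord1 : w a < w (k + 1) :=
    (swap_step w (k + 2) a (k + 1) hwfix (by omega) hl1).1
  have hord2 : w a₁ < w (k + 1) :=
    (swap_step w (k + 2) a₁ (k + 1) hwfix (by omega) hl2).1
  have hab : w a ≠ w a₁ := fun h => hne (w.injective h).symm
  -- unpack the chains
  obtain ⟨c1, d1, _, hcd1, hinj1, hlen1, hveq1⟩ := hch1
  obtain ⟨c2, d2, _, hcd2, hinj2, hlen2, hveq2⟩ := hch2
  have hk1 : ∀ i, c1 i ≤ k ∧ k < d1 i := fun i => ⟨(hcd1 i).2.1, (hcd1 i).2.2⟩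
  have hk2 : ∀ i, c2 i ≤ k ∧ k < d2 i := fun i => ⟨(hcd2 i).2.1, (hcd2 i).2.2⟩
  set τ₁ := PP c1 d1 p with hτ₁
  set τ₂ := PP c2 d2 p with hτ₂
  have hv1 : ∀ x, v x = u₁ (τ₁ x) := by
    intro x
    rw [hveq1, hτ₁, PP_top, Equiv.Perm.mul_apply]
  have hv2 : ∀ x, v x = u₂ (τ₂ x) := by
    intro x
    rw [hveq2, hτ₂, PP_top, Equiv.Perm.mul_apply]
  have hstep1 : ∀ i : Fin p,
      invNum (u₁ * PP c1 d1 ((i : ℕ) + 1)) = invNum u₁ + ((i : ℕ) + 1) := hlen1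
  have hstep2 : ∀ i : Fin p,
      invNum (u₂ * PP c2 d2 ((i : ℕ) + 1)) = invNum u₂ + ((i : ℕ) + 1) := hlen2
  have L4₁ : ∀ i : Fin p, u₁ (τ₁ (d1 i)) < u₁ (d1 i) :=
    fun i => chain_L4 c1 d1 hk1 hinj1 u₁ (k + 2) hu₁big hstep1 i
  have L4₂ : ∀ i : Fin p, u₂ (τ₂ (d2 i)) < u₂ (d2 i) :=
    fun i => chain_L4 c2 d2 hk2 hinj2 u₂ (k + 2) hu₂big hstep2 i
  have L3₁ : ∀ i : Fin p, τ₁ (d1 i) = c1 i ∨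
      ∃ j : Fin p, (j : ℕ) < (i : ℕ) ∧ τ₁ (d1 i) = d1 j ∧ c1 j = c1 i :=
    fun i => chain_L3 c1 d1 hk1 hinj1 i
  have L3₂ : ∀ i : Fin p, τ₂ (d2 i) = c2 i ∨
      ∃ j : Fin p, (j : ℕ) < (i : ℕ) ∧ τ₂ (d2 i) = d2 j ∧ c2 j = c2 i :=
    fun i => chain_L3 c2 d2 hk2 hinj2 i
  have Lsm₁ : ∀ x ≤ k, τ₁ x = x ∨ ∃ j : Fin p, τ₁ x = d1 j ∧ c1 j = x := by
    intro x hx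
    rcases PP_small c1 d1 hk1 hinj1 p le_rfl x hx with h | ⟨j, _, hj2, hj3⟩
    · left; exact h
    · right; exact ⟨j, hj2, hj3⟩
  have Lsm₂ : ∀ x ≤ k, τ₂ x = x ∨ ∃ j : Fin p, τ₂ x = d2 j ∧ c2 j = x := by
    intro x hx
    rcases PP_small c2 d2 hk2 hinj2 p le_rfl x hx with h | ⟨j, _, hj2, hj3⟩
    · left; exact h
    · right; exact ⟨j, hj2, hj3⟩
  have Lmv₁ : ∀ i : Fin p, τ₁ (d1 i) ≠ d1 i := fun i => chain_moved c1 d1 hk1 hinj1 i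
  have Lmv₂ : ∀ i : Fin p, τ₂ (d2 i) ≠ d2 i := fun i => chain_moved c2 d2 hk2 hinj2 i
  have Lfb₁ : ∀ x, k < x → (∀ j, d1 j ≠ x) → τ₁ x = x :=
    fun x hx h => chain_fix_big c1 d1 hk1 x hx h
  have Lfb₂ : ∀ x, k < x → (∀ j, d2 j ≠ x) → τ₂ x = x :=
    fun x hx h => chain_fix_big c2 d2 hk2 x hx h
  -- characterize membership for z ≥ k+2
  have hbig1 : ∀ z, k + 2 ≤ z → ((∃ i, d1 i = z) ↔ v z ≠ z) := by
    intro z hz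
    constructor
    · rintro ⟨i, rfl⟩
      have h1 := L4₁ i
      rw [hu₁big _ hz] at h1
      rw [hv1]
      omega
    · intro hvz
      by_contra hcon
      push_neg at hcon
      rw [hv1, Lfb₁ z (by omega) hcon, hu₁big _ hz] at hvz
      exact hvz rfl
  have hbig2 : ∀ z, k + 2 ≤ z → ((∃ i, d2 i = z) ↔ v z ≠ z) := by
    intro z hz
    constructor
    · rintro ⟨i, rfl⟩
      have h1 := L4₂ i
      rw [hu₂big _ hz] at h1
      rw [hv2]
      omega
    · intro hvz
      by_contra hcon
      push_neg at hcon
      rw [hv2, Lfb₂ z (by omega) hcon, hu₂big _ hz] at hvz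
      exact hvz rfl
  -- k+1 is in both D-sets
  have hDmem : (∃ i, d1 i = k + 1) ∧ (∃ i, d2 i = k + 1) := by
    have hor : (∃ i, d1 i = k + 1) ∨ (∃ i, d2 i = k + 1) := by
      by_contra hcon
      push_neg at hcon
      have h1 : τ₁ (k + 1) = k + 1 := Lfb₁ _ (by omega) (fun j => hcon.1 j)
      have h2 : τ₂ (k + 1) = k + 1 := Lfb₂ _ (by omega) (fun j => hcon.2 j)
      have e1 : v (k + 1) = w a := by rw [hv1, h1, hu₁k]
      have e2 : v (k + 1) = w a₁ := by rw [hv2, h2, hu₂k]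
      exact hab (e1.symm.trans e2)
    -- cardinality: erased finsets are equal
    have herase : (Finset.image d1 Finset.univ).erase (k + 1)
        = (Finset.image d2 Finset.univ).erase (k + 1) := by
      ext z
      simp only [Finset.mem_erase, Finset.mem_image, Finset.mem_univ, true_and]
      constructor
      · rintro ⟨hz1, i, rfl⟩
        have hzk : k < d1 i := (hk1 i).2
        have hz2 : k + 2 ≤ d1 i := by omega
        exact ⟨hz1, (hbig2 _ hz2).mpr ((hbig1 _ hz2).mp ⟨i, rfl⟩)⟩
      · rintro ⟨hz1, i, rfl⟩
        have hzk : k < d2 i := (hk2 i).2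
        have hz2 : k + 2 ≤ d2 i := by omega
        exact ⟨hz1, (hbig1 _ hz2).mpr ((hbig2 _ hz2).mp ⟨i, rfl⟩)⟩
    have hc1 : (Finset.image d1 Finset.univ).card = p := by
      rw [Finset.card_image_of_injective _ hinj1, Finset.card_univ, Fintype.card_fin]
    have hc2 : (Finset.image d2 Finset.univ).card = p := by
      rw [Finset.card_image_of_injective _ hinj2, Finset.card_univ, Fintype.card_fin]
    constructor
    · by_contra hcon
      have hm2 : ∃ i, d2 i = k + 1 := by
        rcases hor with h | h
        · exact absurd h hcon
        · exact h
      have hmem2 : k + 1 ∈ Finset.image d2 Finset.univ := by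
        obtain ⟨i, hi⟩ := hm2
        exact Finset.mem_image.mpr ⟨i, Finset.mem_univ i, hi⟩
      have hnmem1 : k + 1 ∉ Finset.image d1 Finset.univ := by
        intro hcc
        obtain ⟨i, _, hi⟩ := Finset.mem_image.mp hcc
        exact hcon ⟨i, hi⟩
      have e1 : (Finset.image d1 Finset.univ).erase (k + 1) = Finset.image d1 Finset.univ :=
        Finset.erase_eq_of_notMem hnmem1
      rw [herase] at e1
      have hcard := congrArg Finset.card e1
      rw [Finset.card_erase_of_mem hmem2, hc1, hc2] at hcard
      obtain ⟨i0, _⟩ := hm2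
      have hppos : 0 < p := i0.pos
      omega
    · by_contra hcon
      have hm1 : ∃ i, d1 i = k + 1 := by
        rcases hor with h | h
        · exact h
        · exact absurd h hcon
      have hmem1 : k + 1 ∈ Finset.image d1 Finset.univ := by
        obtain ⟨i, hi⟩ := hm1
        exact Finset.mem_image.mpr ⟨i, Finset.mem_univ i, hi⟩
      have hnmem2 : k + 1 ∉ Finset.image d2 Finset.univ := by
        intro hcc
        obtain ⟨i, _, hi⟩ := Finset.mem_image.mp hcc
        exact hcon ⟨i, hi⟩
      have e1 : (Finset.image d2 Finset.univ).erase (k + 1) = Finset.image d2 Finset.univ :=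
        Finset.erase_eq_of_notMem hnmem2
      rw [← herase] at e1
      have hcard := congrArg Finset.card e1
      rw [Finset.card_erase_of_mem hmem1, hc2, hc1] at hcard
      obtain ⟨i0, _⟩ := hm1
      have hppos : 0 < p := i0.pos
      omega
  obtain ⟨⟨i₁, hi₁⟩, ⟨i₂, hi₂⟩⟩ := hDmem
  have hvk1 : v (k + 1) < w a := by
    have h := L4₁ i₁
    rw [hi₁, hu₁k] at h
    rw [hv1]
    exact h
  have hvk2 : v (k + 1) < w a₁ := by
    have h := L4₂ i₂
    rw [hi₂, hu₂k] at h
    rw [hv2]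
    exact h
  -- τ₂ (k+1) is a small column C, equal for both chains
  have hC2 : τ₂ (k + 1) = c2 i₂ := by
    rcases L3₂ i₂ with h | ⟨j, hj1, hj2, _⟩
    · rw [← hi₂]; exact h
    · exfalso
      rw [hi₂] at hj2
      have hne2 : d2 j ≠ k + 1 := by
        intro hcc
        rw [← hi₂] at hcc
        have := hinj2 hcc
        omega
      have hbig : k + 2 ≤ d2 j := by
        have := (hk2 j).2
        omega
      have h := hvk2
      rw [hv2, hj2, hu₂big _ hbig] at h
      have := hwb a₁ (by omega)
      omega
  have hC1 : τ₁ (k + 1) = c1 i₁ := by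
    rcases L3₁ i₁ with h | ⟨j, hj1, hj2, _⟩
    · rw [← hi₁]; exact h
    · exfalso
      rw [hi₁] at hj2
      have hne2 : d1 j ≠ k + 1 := by
        intro hcc
        rw [← hi₁] at hcc
        have := hinj1 hcc
        omega
      have hbig : k + 2 ≤ d1 j := by
        have := (hk1 j).2
        omega
      have h := hvk1
      rw [hv1, hj2, hu₁big _ hbig] at h
      have := hwb a (by omega)
      omega
  obtain ⟨C, hCdef⟩ : ∃ C, τ₂ (k + 1) = C := ⟨_, rfl⟩
  have hCc2 : c2 i₂ = C := by rw [← hCdef, hC2]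
  have hCk : C ≤ k := by rw [← hCc2]; exact (hk2 i₂).1
  have hCa : C ≠ a := by
    intro hcc
    have h := hvk1
    rw [hv2, hCdef, hcc] at h
    rcases eq_or_ne a a₁ with h' | h'
    · exact hne h'.symm
    · rw [hu₂o a h' (by omega)] at h
      omega
  have hCa₁ : C ≠ a₁ := by
    intro hcc
    have h := hvk2
    rw [hv2, hCdef, hcc, hu₂a] at h
    omega
  have hCeq1 : τ₁ (k + 1) = C := by
    have hC1k : c1 i₁ ≤ k := (hk1 i₁).1
    have hCa' : c1 i₁ ≠ a := by
      intro hcc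
      have h := hvk1
      rw [hv1, hC1, hcc, hu₁a] at h
      omega
    have hCa₁' : c1 i₁ ≠ a₁ := by
      intro hcc
      have h := hvk2
      rw [hv1, hC1, hcc] at h
      rw [hu₁o a₁ (fun hh => hne hh) (by omega)] at h
      omega
    have e1 : u₁ (c1 i₁) = w (c1 i₁) := hu₁o _ hCa' (by omega)
    have e2 : u₂ C = w C := hu₂o _ hCa₁ (by omega)
    have e3 : w (c1 i₁) = w C := by
      rw [← e1, ← e2, ← hC1, ← hv1, ← hCdef, ← hv2]
    rw [hC1]
    exact w.injective e3
  have hCmv2 : τ₂ C ≠ C := by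
    intro hcc
    have : C = k + 1 := τ₂.injective (hcc.trans hCdef.symm)
    omega
  have hCmv1 : τ₁ C ≠ C := by
    intro hcc
    have : C = k + 1 := τ₁.injective (hcc.trans hCeq1.symm)
    omega
  obtain ⟨jL, hjL, hjLc⟩ : ∃ j : Fin p, τ₂ C = d2 j ∧ c2 j = C := by
    rcases Lsm₂ C hCk with h | h
    · exact absurd h hCmv2
    · exact h
  obtain ⟨jL', hjL', hjLc'⟩ : ∃ j : Fin p, τ₁ C = d1 j ∧ c1 j = C := by
    rcases Lsm₁ C hCk with h | h
    · exact absurd h hCmv1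
    · exact h
  obtain ⟨L, hLdef⟩ : ∃ L, τ₂ C = L := ⟨_, rfl⟩
  have hLd2 : L = d2 jL := hLdef.symm.trans hjL
  have hLbig : k < L := by rw [hLd2]; exact (hk2 jL).2
  -- transfer lemmas between the two chains
  have htrans : ∀ z, τ₂ z ≠ a → τ₂ z ≠ a₁ → τ₂ z ≠ k + 1 → τ₁ z = τ₂ z := by
    intro z h1 h2 h3
    apply u₁.injective
    rw [← hv1, hv2]
    rw [hu₂o _ h2 h3, hu₁o _ h1 h3]
  have himgk : ∀ z, τ₂ z = k + 1 → τ₁ z = a₁ := by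
    intro z hz
    apply u₁.injective
    rw [← hv1, hv2, hz, hu₂k, hu₁o a₁ (fun hh => hne hh) (by omega)]
  have hLne : L ≠ k + 1 := by
    intro hcc
    have h1 : τ₁ C = a₁ := himgk C (hLdef.trans hcc)
    rw [hjL'] at h1
    have := (hk1 jL').2
    omega
  have hLeq : τ₁ C = L := by
    rw [← hLdef]
    apply htrans
    · intro hcc
      have : L = a := hLdef.symm.trans hcc
      omega
    · intro hcc
      have : L = a₁ := hLdef.symm.trans hcc
      omega
    · intro hcc
      exact hLne (hLdef.symm.trans hcc)
  have hLd1 : L = d1 jL' := hLeq.symm.trans hjL'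
  -- termination of the walk
  have horbit : ∃ n, (τ₂ : Equiv.Perm ℕ) ((⇑τ₂)^[n] L) = a
      ∨ (τ₂ : Equiv.Perm ℕ) ((⇑τ₂)^[n] L) = a₁
      ∨ (τ₂ : Equiv.Perm ℕ) ((⇑τ₂)^[n] L) = k + 1 := by
    set SS : Finset ℕ := insert L (Finset.image c2 Finset.univ ∪ Finset.image d2 Finset.univ)
      with hSS
    have hmemS : ∀ n, (⇑τ₂)^[n] L ∈ SS := by
      intro n
      induction n with
      | zero => exact Finset.mem_insert_self _ _
      | succ n ih =>
        rw [Function.iterate_succ_apply']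
        rcases eq_or_ne (τ₂ ((⇑τ₂)^[n] L)) ((⇑τ₂)^[n] L) with h | h
        · rw [h]; exact ih
        · rcases le_or_gt ((⇑τ₂)^[n] L) k with hyk | hyk
          · rcases Lsm₂ _ hyk with h' | ⟨j, hj1, _⟩
            · exact absurd h' h
            · rw [hj1]
              exact Finset.mem_insert_of_mem (Finset.mem_union_right _
                (Finset.mem_image.mpr ⟨j, Finset.mem_univ j, rfl⟩))
          · have hyd : ∃ i, d2 i = (⇑τ₂)^[n] L := by
              by_contra hcon
              push_neg at hcon
              exact h (Lfb₂ _ hyk hcon)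
            obtain ⟨i, hi⟩ := hyd
            rw [← hi]
            rcases L3₂ i with h' | ⟨j, _, h', _⟩
            · rw [h']
              exact Finset.mem_insert_of_mem (Finset.mem_union_left _
                (Finset.mem_image.mpr ⟨i, Finset.mem_univ i, rfl⟩))
            · rw [h']
              exact Finset.mem_insert_of_mem (Finset.mem_union_right _
                (Finset.mem_image.mpr ⟨j, Finset.mem_univ j, rfl⟩))
    obtain ⟨n1, hn1, n2, hn2, hnne, heq⟩ :=
      Finset.exists_ne_map_eq_of_card_lt_of_maps_to
        (s := Finset.range (SS.card + 1)) (t := SS)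
        (by rw [Finset.card_range]; omega) (fun n _ => hmemS n)
    have hkey : ∀ m1 m2 : ℕ, m1 < m2 → (⇑τ₂)^[m1] L = (⇑τ₂)^[m2] L →
        ∃ q, 1 ≤ q ∧ (⇑τ₂)^[q] L = L := by
      intro m1 m2 hlt he
      refine ⟨m2 - m1, by omega, ?_⟩
      have h3 : (⇑τ₂)^[m1] ((⇑τ₂)^[m2 - m1] L) = (⇑τ₂)^[m1] L := by
        rw [← Function.iterate_add_apply]
        rw [show m1 + (m2 - m1) = m2 by omega]
        exact he.symm
      exact (τ₂.injective.iterate m1) h3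
    have hq : ∃ q, 1 ≤ q ∧ (⇑τ₂)^[q] L = L := by
      rcases lt_or_gt_of_ne hnne with h | h
      · exact hkey n1 n2 h heq
      · exact hkey n2 n1 h heq.symm
    obtain ⟨q, hq1, hq2⟩ := hq
    have hk1L : (⇑τ₂)^[2] (k + 1) = L := by
      rw [Function.iterate_succ_apply', Function.iterate_one, hCdef, hLdef]
    have hqne1 : q ≠ 1 := by
      intro hcc
      rw [hcc, Function.iterate_one] at hq2
      have hmv := Lmv₂ jL
      rw [← hLd2] at hmv
      exact hmv hq2
    have hqne2 : q ≠ 2 := by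
      intro hcc
      rw [hcc] at hq2
      have := (τ₂.injective.iterate 2) (hk1L.trans hq2.symm)
      omega
    have hq3 : 3 ≤ q := by omega
    have hkk : (⇑τ₂)^[q - 2] L = k + 1 := by
      apply (τ₂.injective.iterate 2)
      rw [← Function.iterate_add_apply]
      rw [show 2 + (q - 2) = q by omega, hq2, hk1L]
    refine ⟨q - 3, Or.inr (Or.inr ?_)⟩
    have hstep3 : (⇑τ₂)^[q - 3 + 1] L = k + 1 := by
      rw [show q - 3 + 1 = q - 2 by omega]
      exact hkk
    rw [Function.iterate_succ_apply'] at hstep3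
    exact hstep3
  -- the minimal hitting time
  have hn₀spec := Nat.find_spec horbit
  have hn₀min : ∀ m, m < Nat.find horbit → ¬ ((τ₂ : Equiv.Perm ℕ) ((⇑τ₂)^[m] L) = a
      ∨ (τ₂ : Equiv.Perm ℕ) ((⇑τ₂)^[m] L) = a₁
      ∨ (τ₂ : Equiv.Perm ℕ) ((⇑τ₂)^[m] L) = k + 1) :=
    fun m hm => Nat.find_min horbit hm
  obtain ⟨n₀, hn₀def⟩ : ∃ n₀, Nat.find horbit = n₀ := ⟨_, rfl⟩
  rw [hn₀def] at hn₀spec hn₀min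
  -- the walk invariant
  have hwalk : ∀ n, n ≤ n₀ → ((⇑τ₁)^[n] L = (⇑τ₂)^[n] L ∧
      ∃ (jj jj' : Fin p), (⇑τ₂)^[n] L = d2 jj ∧ c2 jj = C ∧
        (⇑τ₂)^[n] L = d1 jj' ∧ c1 jj' = C) := by
    intro n
    induction n with
    | zero =>
      intro _
      exact ⟨rfl, jL, jL', by rw [Function.iterate_zero_apply]; exact hLd2,
        hjLc, by rw [Function.iterate_zero_apply]; exact hLd1, hjLc'⟩
    | succ n ih =>
      intro hn1
      obtain ⟨hit, jj, jj', hjj, hjjc, hjj', hjjc'⟩ := ih (by omega)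
      have hQn := hn₀min n (by omega)
      push_neg at hQn
      obtain ⟨hna, hna₁, hnk⟩ := hQn
      have hagree : τ₁ ((⇑τ₂)^[n] L) = τ₂ ((⇑τ₂)^[n] L) := htrans _ hna hna₁ hnk
      have hit' : (⇑τ₁)^[n + 1] L = (⇑τ₂)^[n + 1] L := by
        rw [Function.iterate_succ_apply', Function.iterate_succ_apply', hit, hagree]
      have hgne : (⇑τ₂)^[n] L ≠ k + 1 := by
        intro hcc
        cases n with
        | zero =>
          rw [Function.iterate_zero_apply] at hcc
          exact hLne hcc
        | succ m =>
          have hQm := hn₀min m (by omega)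
          push_neg at hQm
          rw [Function.iterate_succ_apply'] at hcc
          exact hQm.2.2 hcc
      have hnotC : τ₂ ((⇑τ₂)^[n] L) ≠ C := by
        intro hcc
        exact hgne (τ₂.injective (hcc.trans hCdef.symm))
      obtain ⟨j2, hj2, hj2c⟩ : ∃ j : Fin p, τ₂ ((⇑τ₂)^[n] L) = d2 j ∧ c2 j = C := by
        have h := L3₂ jj
        rw [← hjj] at h
        rcases h with h | ⟨j, _, h1, h2⟩
        · exact absurd (h.trans hjjc) hnotC
        · exact ⟨j, h1, h2.trans hjjc⟩
      obtain ⟨j1, hj1, hj1c⟩ : ∃ j : Fin p, τ₁ ((⇑τ₂)^[n] L) = d1 j ∧ c1 j = C := by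
        have h := L3₁ jj'
        rw [← hjj'] at h
        rcases h with h | ⟨j, _, h1, h2⟩
        · rw [hagree] at h
          exact absurd (h.trans hjjc') hnotC
        · exact ⟨j, h1, h2.trans hjjc'⟩
      refine ⟨hit', j2, j1, ?_, hj2c, ?_, hj1c⟩
      · rw [Function.iterate_succ_apply', hj2]
      · rw [Function.iterate_succ_apply', ← hagree, hj1]
  -- final contradiction
  obtain ⟨hit, jj, jj', hjj, hjjc, hjj', hjjc'⟩ := hwalk n₀ le_rfl
  rcases hn₀spec with hfin | hfin | hfin
  · have h := L3₂ jj
    rw [← hjj, hfin] at h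
    rcases h with h | ⟨j, _, h1, _⟩
    · exact hCa (h.trans hjjc).symm
    · have := (hk2 j).2
      omega
  · have h := L3₂ jj
    rw [← hjj, hfin] at h
    rcases h with h | ⟨j, _, h1, _⟩
    · exact hCa₁ (h.trans hjjc).symm
    · have := (hk2 j).2
      omega
  · have h1 : τ₁ ((⇑τ₂)^[n₀] L) = a₁ := himgk _ hfin
    have h := L3₁ jj'
    rw [← hjj', h1] at h
    rcases h with h | ⟨j, _, h2, _⟩
    · exact hCa₁ (h.trans hjjc').symm
    · have := (hk1 j).2
      omega

/-- Lemma 3.6 (special configuration): with `u₁ = w·t_{a,k+1}·t_{a,k+2}⋯t_{a,k+m}`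
and `u₂ = w·t_{a₁,k+1}·t_{a,k+2}⋯t_{a,k+m}`, `a₁ ≠ a`, both obtained increasing
the length by one at each step, no permutation `v` can be reached from both `u₁`
and `u₂` by Pieri chains of the same length `p ≥ 1`. -/
theorem stmt_11 (k m : ℕ) (hm : 0 < m) (a a₁ : ℕ)
    (h1a : 1 ≤ a) (hak : a ≤ k) (h1a1 : 1 ≤ a₁) (ha1k : a₁ ≤ k) (hne : a₁ ≠ a)
    (w u₁ u₂ : Equiv.Perm ℕ) (hw0 : w 0 = 0) (hfix : ∀ j, k + 1 < j → w j = j)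
    (hu₁ : u₁ = w * (List.ofFn fun j : Fin m => Equiv.swap a (k + 1 + (j : ℕ))).prod)
    (hlen₁ : ∀ i : Fin m,
      invNum (w * ((List.ofFn fun j : Fin m => Equiv.swap a (k + 1 + (j : ℕ))).take ((i : ℕ) + 1)).prod)
        = invNum w + ((i : ℕ) + 1))
    (hu₂ : u₂ = w * (Equiv.swap a₁ (k + 1) ::
        List.ofFn fun j : Fin (m - 1) => Equiv.swap a (k + 2 + (j : ℕ))).prod)
    (hlen₂ : ∀ i : Fin m,
      invNum (w * ((Equiv.swap a₁ (k + 1) ::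
          List.ofFn fun j : Fin (m - 1) => Equiv.swap a (k + 2 + (j : ℕ))).take ((i : ℕ) + 1)).prod)
        = invNum w + ((i : ℕ) + 1)) :
    ∀ p, 1 ≤ p → ¬ ∃ v, PieriChain k p u₁ v ∧ PieriChain k p u₂ v := by
  have hwfix : ∀ z, k + 2 ≤ z → w z = z := fun z hz => hfix z (by omega)
  have hwb : ∀ z, z ≤ k + 1 → w z ≤ k + 1 := by
    intro z hz
    by_contra hcon
    push_neg at hcon
    have h1 : w (w z) = w z := hwfix (w z) (by omega)
    have h2 := w.injective h1
    omega
  rcases m with _ | m'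
  · omega
  rcases m' with _ | n
  · -- m = 1
    intro p hp
    rintro ⟨v, hch1, hch2⟩
    have e₁ : (List.ofFn fun j : Fin 1 => Equiv.swap a (k + 1 + (j : ℕ)))
        = [Equiv.swap a (k + 1)] := by
      simp [List.ofFn_succ]
    have e₂ : (Equiv.swap a₁ (k + 1) ::
        List.ofFn fun j : Fin (1 - 1) => Equiv.swap a (k + 2 + (j : ℕ)))
        = [Equiv.swap a₁ (k + 1)] := by
      simp
    have hu₁' : u₁ = w * Equiv.swap a (k + 1) := by
      rw [hu₁, e₁]; simp
    have hu₂' : u₂ = w * Equiv.swap a₁ (k + 1) := by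
      rw [hu₂, e₂]; simp
    have hl1 : invNum (w * Equiv.swap a (k + 1)) = invNum w + 1 := by
      have h := hlen₁ ⟨0, by omega⟩
      rw [e₁] at h
      simpa using h
    have hl2 : invNum (w * Equiv.swap a₁ (k + 1)) = invNum w + 1 := by
      have h := hlen₂ ⟨0, by omega⟩
      rw [e₂] at h
      simpa using h
    rw [hu₁'] at hch1
    rw [hu₂'] at hch2
    exact main1 k a a₁ h1a hak h1a1 ha1k hne w hwfix hl1 hl2 p v hch1 hch2
  · -- m ≥ 2 : the hypotheses are contradictory
    exfalso
    have e₁ : ((List.ofFn fun j : Fin (n + 2) => Equiv.swap a (k + 1 + (j : ℕ))).take 1).prod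
        = Equiv.swap a (k + 1) := by
      rw [List.ofFn_succ]
      simp
    have e₂ : ((Equiv.swap a₁ (k + 1) ::
        List.ofFn fun j : Fin (n + 2 - 1) => Equiv.swap a (k + 2 + (j : ℕ))).take 1).prod
        = Equiv.swap a₁ (k + 1) := by
      simp
    have e₃ : ((Equiv.swap a₁ (k + 1) ::
        List.ofFn fun j : Fin (n + 2 - 1) => Equiv.swap a (k + 2 + (j : ℕ))).take 2).prod
        = Equiv.swap a₁ (k + 1) * Equiv.swap a (k + 2) := by
      show ((Equiv.swap a₁ (k + 1) ::
        List.ofFn fun j : Fin (n + 1) => Equiv.swap a (k + 2 + (j : ℕ))).take 2).prod = _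
      rw [List.ofFn_succ]
      simp
    have hl1 : invNum (w * Equiv.swap a (k + 1)) = invNum w + 1 := by
      have h := hlen₁ ⟨0, by omega⟩
      simpa [e₁] using h
    have hl2 : invNum (w * Equiv.swap a₁ (k + 1)) = invNum w + 1 := by
      have h := hlen₂ ⟨0, by omega⟩
      simpa [e₂] using h
    have hl3 : invNum ((w * Equiv.swap a₁ (k + 1)) * Equiv.swap a (k + 2))
        = invNum (w * Equiv.swap a₁ (k + 1)) + 1 := by
      have h := hlen₂ ⟨1, by omega⟩
      rw [show ((⟨1, by omega⟩ : Fin (n + 2)) : ℕ) = 1 from rfl] at h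
      rw [e₃, ← mul_assoc] at h
      omega
    have hF0a : w a < w (k + 1) :=
      (swap_step w (k + 2) a (k + 1) hwfix (by omega) hl1).1
    have hF1b := swap_step w (k + 2) a₁ (k + 1) hwfix (by omega) hl2
    have hπfix : ∀ z, k + 2 ≤ z → (w * Equiv.swap a₁ (k + 1)) z = z := by
      intro z hz
      rw [Equiv.Perm.mul_apply, Equiv.swap_apply_of_ne_of_ne (by omega) (by omega)]
      exact hwfix z hz
    have hF1c := swap_step (w * Equiv.swap a₁ (k + 1)) (k + 2) a (k + 2) hπfix (by omega) hl3
    have hπa : (w * Equiv.swap a₁ (k + 1)) a = w a := by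
      rw [Equiv.Perm.mul_apply, Equiv.swap_apply_of_ne_of_ne (fun h => hne h.symm) (by omega)]
    have hπk1 : (w * Equiv.swap a₁ (k + 1)) (k + 1) = w a₁ := by
      rw [Equiv.Perm.mul_apply, Equiv.swap_apply_right]
    have hπa₁ : (w * Equiv.swap a₁ (k + 1)) a₁ = w (k + 1) := by
      rw [Equiv.Perm.mul_apply, Equiv.swap_apply_left]
    have hπk2 : (w * Equiv.swap a₁ (k + 1)) (k + 2) = k + 2 := hπfix (k + 2) le_rfl
    have hβ : w a₁ ≤ k + 1 := hwb a₁ (by omega)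
    have hγ : w (k + 1) ≤ k + 1 := hwb (k + 1) le_rfl
    have hnab : w a ≠ w a₁ := fun h => hne (w.injective h).symm
    have hstep1 := hF1c.2 (k + 1) (by omega) (by omega)
    rw [hπa, hπk1, hπk2] at hstep1
    have hba : w a₁ < w a := by
      rcases lt_or_gt_of_ne hnab with h | h
      · exact absurd ⟨h, by omega⟩ hstep1
      · exact h
    have haa1 : a₁ < a := by
      rcases lt_trichotomy a a₁ with h | h | h
      · exfalso
        have hstep2 := hF1c.2 a₁ h (by omega)
        rw [hπa, hπa₁, hπk2] at hstep2
        exact hstep2 ⟨hF0a, by omega⟩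
      · exact absurd h.symm hne
      · exact h
    exact hF1b.2 a haa1 (by omega) ⟨hba, hF0a⟩
end
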